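/- arXiv:1706.04537 — 7 statements merged into one kernel-verified Lean document; each statement's English description precedes it below -/
import Mathlib

section
/- Let G be a finite simple graph and vw an edge of G. Then vw is exposed if and only if the common open neighborhood N_G(v) ∩ N_G(w) is a nonempty clique in G. -/
variable {V : Type*}

/-- A maximal clique of `G`: a clique not properly contained in any other clique. -/
def IsMaxClique (G : SimpleGraph V) (s : Set V) : Prop :=
  G.IsClique s ∧ ∀ t : Set V, G.IsClique t → s ⊆ t → t = s

/-- `xy` is a facet edge of `G` if it is an edge and `{x, y}` is a maximal clique. -/
def IsFacetEdge (G : SimpleGraph V) (x y : V) : Prop :=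
  G.Adj x y ∧ IsMaxClique G {x, y}

/-- `xy` is an exposed edge of `G` if it is an edge contained in a unique maximal
clique and it is not a facet edge. -/
def IsExposedEdge (G : SimpleGraph V) (x y : V) : Prop :=
  G.Adj x y ∧ (∃! s : Set V, IsMaxClique G s ∧ x ∈ s ∧ y ∈ s) ∧ ¬ IsFacetEdge G x y

/-- A graph is chordal if every cycle of length at least four has a chord, i.e. an
edge of the graph joining two vertices of the cycle which is not an edge of the cycle. -/
def IsChordal (G : SimpleGraph V) : Prop :=
  ∀ ⦃v : V⦄ (w : G.Walk v v), w.IsCycle → 4 ≤ w.length →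
    ∃ a b, a ∈ w.support ∧ b ∈ w.support ∧ G.Adj a b ∧ s(a, b) ∉ w.edges

/-- `H` is obtained from `G` through an erasure: deletion of a single exposed edge. -/
def Erasure (G H : SimpleGraph V) : Prop :=
  ∃ x y : V, IsExposedEdge G x y ∧ H = G.deleteEdges {s(x, y)}


/-! Every clique containing both ends of an edge `vw` lies in `{v, w} ∪ N(v) ∩ N(w)`, and
conversely `{v, w} ∪ A` is a clique for every clique `A ⊆ N(v) ∩ N(w)`. So `vw` lies in a unique
maximal clique exactly when `N(v) ∩ N(w)` is a clique (the maximal clique is then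
`{v, w} ∪ N(v) ∩ N(w)`), and `{v, w}` itself is maximal exactly when `N(v) ∩ N(w)` is empty. -/

section

open SimpleGraph

variable {G : SimpleGraph V} {s t A : Set V} {v w : V}

lemma isMaxClique_iff_isMaxChain : IsMaxClique G s ↔ IsMaxChain G.Adj s := by
  simp only [IsMaxClique, IsMaxChain, SimpleGraph.isClique_iff_isChain_adj, eq_comm]

lemma SimpleGraph.IsClique.exists_isMaxClique_superset (hs : G.IsClique s) :
    ∃ t, IsMaxClique G t ∧ s ⊆ t := by
  simp only [isMaxClique_iff_isMaxChain]
  exact (G.isClique_iff_isChain_adj.mp hs).exists_maxChain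

lemma SimpleGraph.subset_insert_insert_commonNeighbors (ht : G.IsClique t)
    (hv : v ∈ t) (hw : w ∈ t) : t ⊆ insert v (insert w (G.commonNeighbors v w)) := by
  intro u hu
  by_cases huv : u = v
  · exact .inl huv
  by_cases huw : u = w
  · exact .inr (.inl huw)
  exact .inr (.inr ⟨ht hv hu (Ne.symm huv), ht hw hu (Ne.symm huw)⟩)

lemma SimpleGraph.isClique_insert_insert_of_subset_commonNeighbors (hA : G.IsClique A)
    (hAN : A ⊆ G.commonNeighbors v w) (hvw : G.Adj v w) :
    G.IsClique (insert v (insert w A)) := by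
  refine isClique_insert.mpr ⟨isClique_insert.mpr ⟨hA, ?_⟩, ?_⟩
  · exact fun u hu _ => (hAN hu).2
  · rintro u (rfl | hu) -
    · exact hvw
    · exact (hAN hu).1

lemma SimpleGraph.isClique_insert_insert_of_mem_commonNeighbors {u : V}
    (hu : u ∈ G.commonNeighbors v w) (hvw : G.Adj v w) : G.IsClique {v, w, u} :=
  isClique_insert_insert_of_subset_commonNeighbors (G.isClique_singleton u)
    (Set.singleton_subset_iff.mpr hu) hvw

lemma isMaxClique_insert_insert_commonNeighbors (hvw : G.Adj v w)
    (hN : G.IsClique (G.commonNeighbors v w)) :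
    IsMaxClique G (insert v (insert w (G.commonNeighbors v w))) :=
  ⟨isClique_insert_insert_of_subset_commonNeighbors hN subset_rfl hvw, fun _ ht hSt =>
    (subset_insert_insert_commonNeighbors ht (hSt (.inl rfl)) (hSt (.inr (.inl rfl)))).antisymm hSt⟩

lemma IsMaxClique.eq_insert_insert_commonNeighbors (hs : IsMaxClique G s) (hv : v ∈ s)
    (hw : w ∈ s) (hvw : G.Adj v w) (hN : G.IsClique (G.commonNeighbors v w)) :
    s = insert v (insert w (G.commonNeighbors v w)) :=
  (hs.2 _ (isClique_insert_insert_of_subset_commonNeighbors hN subset_rfl hvw)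
    (subset_insert_insert_commonNeighbors hs.1 hv hw)).symm

lemma isFacetEdge_iff_commonNeighbors_eq_empty (hvw : G.Adj v w) :
    IsFacetEdge G v w ↔ G.commonNeighbors v w = ∅ := by
  constructor
  · rintro ⟨-, -, hmax⟩
    refine Set.eq_empty_of_forall_notMem fun u hu => ?_
    have hpair := hmax _ (isClique_insert_insert_of_mem_commonNeighbors hu hvw)
      (Set.insert_subset_insert (Set.singleton_subset_iff.mpr (Set.mem_insert _ _)))
    have hu_mem : u ∈ ({v, w} : Set V) := hpair ▸ .inr (.inr rfl)
    rcases hu_mem with rfl | rfl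
    exacts [hu.1.ne' rfl, hu.2.ne' rfl]
  · intro hN
    refine ⟨hvw, G.isClique_pair.mpr fun _ => hvw, fun t ht hvwt => ?_⟩
    have := subset_insert_insert_commonNeighbors ht (hvwt (.inl rfl)) (hvwt (.inr rfl))
    rw [hN, insert_empty_eq] at this
    exact this.antisymm hvwt

lemma commonNeighbors_subset_of_forall_isMaxClique_eq (hvw : G.Adj v w)
    (huniq : ∀ t, IsMaxClique G t ∧ v ∈ t ∧ w ∈ t → t = s) : G.commonNeighbors v w ⊆ s := by
  intro u hu
  obtain ⟨t, ht, hvwu⟩ :=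
    (isClique_insert_insert_of_mem_commonNeighbors hu hvw).exists_isMaxClique_superset
  rw [← huniq t ⟨ht, hvwu (.inl rfl), hvwu (.inr (.inl rfl))⟩]
  exact hvwu (.inr (.inr rfl))

end

theorem isExposedEdge_iff_commonNeighborhood_general (G : SimpleGraph V)
    (v w : V) (hvw : G.Adj v w) :
    IsExposedEdge G v w ↔
      (G.neighborSet v ∩ G.neighborSet w).Nonempty ∧
        G.IsClique (G.neighborSet v ∩ G.neighborSet w) := by
  change _ ↔ (G.commonNeighbors v w).Nonempty ∧ G.IsClique (G.commonNeighbors v w)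
  rw [IsExposedEdge, isFacetEdge_iff_commonNeighbors_eq_empty hvw,
    ← Set.not_nonempty_iff_eq_empty, not_not]
  constructor
  · rintro ⟨-, ⟨s, ⟨hs, -, -⟩, huniq⟩, hne⟩
    exact ⟨hne, hs.1.subset (commonNeighbors_subset_of_forall_isMaxClique_eq hvw huniq)⟩
  · rintro ⟨hne, hN⟩
    refine ⟨hvw, ⟨_, ⟨isMaxClique_insert_insert_commonNeighbors hvw hN, .inl rfl, .inr (.inl rfl)⟩,
      fun t ⟨ht, hv, hw⟩ => ht.eq_insert_insert_commonNeighbors hv hw hvw hN⟩, hne⟩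

/-- An edge `vw` is exposed if and only if the common open neighborhood
`N_G(v) ∩ N_G(w)` is a nonempty clique in `G`. -/
theorem isExposedEdge_iff_commonNeighborhood [Fintype V] (G : SimpleGraph V)
    (v w : V) (hvw : G.Adj v w) :
    IsExposedEdge G v w ↔
      (G.neighborSet v ∩ G.neighborSet w).Nonempty ∧
        G.IsClique (G.neighborSet v ∩ G.neighborSet w) :=
  isExposedEdge_iff_commonNeighborhood_general G v w hvw
end

section
/- Let G be a finite simple connected chordal graph that is not complete. Then there exist non-adjacent vertices v and w of G such that the graph G + vw obtained by adding the edge vw is chordal and the edge vw is exposed in G + vw. -/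
variable {V : Type*}

/-!
Among the pairs of distinct non-adjacent vertices choose `v, w` with the most common neighbours;
since `G` is connected and not complete, some such pair has a common neighbour. In a chordal
graph a vertex off a chordless path and adjacent to both of its ends is adjacent to its second
vertex. So if `v, x₁, x₂, …, w` were a chordless path of length at least three, every common
neighbour of `v, w` would be a common neighbour of `v, x₂`, and so would `x₁`, contradicting
maximality. Thus all chordless `v`–`w` paths of `G` have length two, so a long cycle of `G + vw`
through `vw` has a chord in `G`. The common neighbours of `v, w` form a clique (else `G` has an
induced `4`-cycle), so together with `v, w` they form the unique maximal clique of `G + vw`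
containing `vw`, and it is larger than `{v, w}`.
-/

namespace SimpleGraph.Walk

variable {G : SimpleGraph V} {u v w x y : V}

theorem IsPath.eq_of_mem_support_of_append {p : G.Walk u v} {q : G.Walk v w}
    (hpq : (p.append q).IsPath) (hx : x ∈ p.support) (hx' : x ∈ q.support) : x = v :=
  by_contra fun hxv ↦ hpq.ne_of_mem_support_of_append hxv hx hx' rfl

theorem IsChordless.of_append_left {p : G.Walk u v} {q : G.Walk v w}
    (hpq : (p.append q).IsPath) (hc : (p.append q).IsChordless) : p.IsChordless := by
  rw [isChordless_iff_forall_mem_edges]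
  intro a b ha hb hab
  have hmem := hc.mem_edges (p.support_subset_support_append_left q ha)
    (p.support_subset_support_append_left q hb) hab
  rw [edges_append, List.mem_append] at hmem
  refine hmem.resolve_right fun hq ↦ hab.ne ?_
  rw [hpq.eq_of_mem_support_of_append ha (q.fst_mem_support_of_mem_edges hq),
    hpq.eq_of_mem_support_of_append hb (q.snd_mem_support_of_mem_edges hq)]

theorem IsChordless.of_append_right {p : G.Walk u v} {q : G.Walk v w}
    (hpq : (p.append q).IsPath) (hc : (p.append q).IsChordless) : q.IsChordless := by
  rw [isChordless_iff_forall_mem_edges]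
  intro a b ha hb hab
  have hmem := hc.mem_edges (p.support_subset_support_append_right q ha)
    (p.support_subset_support_append_right q hb) hab
  rw [edges_append, List.mem_append] at hmem
  refine hmem.resolve_left fun hp ↦ hab.ne ?_
  rw [hpq.eq_of_mem_support_of_append (p.fst_mem_support_of_mem_edges hp) ha,
    hpq.eq_of_mem_support_of_append (p.snd_mem_support_of_mem_edges hp) hb]

theorem IsChordless.of_isSubwalk {p : G.Walk u v} {q : G.Walk x y} (hp : p.IsPath)
    (hc : p.IsChordless) (hq : q.IsSubwalk p) : q.IsChordless := by
  obtain ⟨r₁, r₂, rfl⟩ := hq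
  exact (hc.of_append_left hp).of_append_right hp.of_append_left

theorem IsPath.snd_ne_penultimate {p : G.Walk u v} (hp : p.IsPath) (hlen : 3 ≤ p.length) :
    p.snd ≠ p.penultimate := fun h ↦ by
  have := hp.getVert_injOn (by omega : 1 ≤ p.length) (by omega : p.length - 1 ≤ p.length) h
  omega

theorem IsCycle.exists_cons_of_mem_edges {c : G.Walk u u} (hc : c.IsCycle)
    (he : s(v, w) ∈ c.edges) :
    ∃ (h : G.Adj v w) (q : G.Walk w v), (cons h q).IsCycle ∧ (cons h q).length = c.length ∧
      (cons h q).toSubgraph = c.toSubgraph := by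
  classical
  have hv : v ∈ c.support := c.fst_mem_support_of_mem_edges he
  obtain ⟨c', hc', hsnd, hlen, hsub⟩ : ∃ c' : G.Walk v v, c'.IsCycle ∧ c'.snd = w ∧
      c'.length = c.length ∧ c'.toSubgraph = c.toSubgraph := by
    have hw : w ∈ (c.rotate v hv).toSubgraph.neighborSet v := by
      rw [toSubgraph_rotate]
      exact c.mem_edges_toSubgraph.mpr he
    rw [(hc.rotate hv).neighborSet_toSubgraph_endpoint] at hw
    rcases hw with hw | hw
    · exact ⟨_, hc.rotate hv, hw.symm, by simp, toSubgraph_rotate ..⟩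
    · refine ⟨_, (hc.rotate hv).reverse, ?_, by simp, by rw [toSubgraph_reverse, toSubgraph_rotate]⟩
      rw [hw, snd, getVert_reverse]
  cases c' with
  | nil => exact absurd hc' not_isCycle_nil
  | cons h q =>
    rw [snd_cons] at hsnd
    subst hsnd
    exact ⟨h, q, hc', hlen, hsub⟩

end SimpleGraph.Walk

namespace SimpleGraph

variable {G : SimpleGraph V} {v w : V}

theorem Walk.exists_not_adj_commonNeighbors_nonempty (p : G.Walk v w) (hvw : v ≠ w)
    (hnvw : ¬G.Adj v w) : ∃ a b, a ≠ b ∧ ¬G.Adj a b ∧ (G.commonNeighbors a b).Nonempty := by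
  induction p with
  | nil => exact absurd rfl hvw
  | @cons v x w hvx q ih =>
    by_cases hxw : G.Adj x w
    · exact ⟨v, w, hvw, hnvw, x, G.mem_commonNeighbors.mpr ⟨hvx, hxw.symm⟩⟩
    · exact ih (fun h ↦ hnvw (h ▸ hvx)) hxw

theorem Connected.exists_not_adj_commonNeighbors_nonempty (hconn : G.Connected) (hG : G ≠ ⊤) :
    ∃ a b, a ≠ b ∧ ¬G.Adj a b ∧ (G.commonNeighbors a b).Nonempty := by
  obtain ⟨a, b, hab, hnab⟩ : ∃ a b, a ≠ b ∧ ¬G.Adj a b := by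
    by_contra! h
    exact hG (eq_top_iff.mpr fun a b hab ↦ h a b hab)
  exact (hconn.preconnected a b).some.exists_not_adj_commonNeighbors_nonempty hab hnab

theorem IsClique.subset_union_commonNeighbors {t : Set V} (ht : G.IsClique t)
    (hv : v ∈ t) (hw : w ∈ t) : t ⊆ {v, w} ∪ G.commonNeighbors v w := by
  intro z hz
  by_cases hzv : z = v
  · exact Or.inl (Or.inl hzv)
  by_cases hzw : z = w
  · exact Or.inl (Or.inr hzw)
  exact Or.inr (G.mem_commonNeighbors.mpr ⟨ht hv hz (Ne.symm hzv), ht hw hz (Ne.symm hzw)⟩)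

theorem commonNeighbors_sup_edge : (G ⊔ edge v w).commonNeighbors v w = G.commonNeighbors v w := by
  ext u
  simp only [mem_commonNeighbors, sup_adj, edge_adj]
  grind [SimpleGraph.irrefl]

end SimpleGraph

open SimpleGraph Walk

theorem isExposedEdge_of_isClique_commonNeighbors {G : SimpleGraph V} {v w : V} (hvw : G.Adj v w)
    (hc : G.IsClique (G.commonNeighbors v w)) (hne : (G.commonNeighbors v w).Nonempty) :
    IsExposedEdge G v w := by
  set S := {v, w} ∪ G.commonNeighbors v w
  have hS : G.IsClique S := by
    rw [show S = insert v (insert w (G.commonNeighbors v w)) by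
      simp only [S, Set.insert_union, Set.singleton_union], isClique_insert,
      isClique_insert]
    refine ⟨⟨hc, fun b hb _ ↦ (G.mem_commonNeighbors.mp hb).2⟩, ?_⟩
    rintro b (rfl | hb) -
    · exact hvw
    · exact (G.mem_commonNeighbors.mp hb).1
  have hSmax : IsMaxClique G S := ⟨hS, fun t ht hSt ↦
    (ht.subset_union_commonNeighbors (hSt (by simp [S] : v ∈ S))
      (hSt (by simp [S] : w ∈ S))).antisymm hSt⟩
  refine ⟨hvw, ⟨S, ⟨hSmax, by simp [S], by simp [S]⟩, fun t ⟨ht, htv, htw⟩ ↦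
    (ht.2 S hS (ht.1.subset_union_commonNeighbors htv htw)).symm⟩, ?_⟩
  rintro ⟨-, -, hmax⟩
  obtain ⟨u, hu⟩ := hne
  have hu' : u ∈ ({v, w} : Set V) := by
    rw [← hmax S hS (by simp [S])]
    simp [S, hu]
  rcases hu' with rfl | rfl
  exacts [G.notMem_commonNeighbors_left _ _ hu, G.notMem_commonNeighbors_right _ _ hu]

section Chordal

variable {G : SimpleGraph V} {s v w : V}

theorem IsChordal.exists_adj_inner_of_adj_ends (hch : IsChordal G) {p : G.Walk v w}
    (hp : p.IsPath) (hpc : p.IsChordless) (hlen : 2 ≤ p.length) (hs : s ∉ p.support)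
    (hsv : G.Adj s v) (hsw : G.Adj s w) : ∃ b ∈ p.support, G.Adj s b ∧ b ≠ v ∧ b ≠ w := by
  have hvw : v ≠ w := by
    rintro rfl
    exact absurd (length_eq_zero_iff.mpr (isPath_iff_nil.mp hp)) (by omega)
  -- since `p` is chordless, every chord of the cycle `s, v, …, w, s` ends at `s`
  let c : G.Walk s s := cons hsv (p.concat hsw.symm)
  have hc : c.IsCycle := by
    refine (cons_isCycle_iff _ _).mpr ⟨hp.concat hs hsw.symm, ?_⟩
    rw [edges_concat, List.concat_eq_append, List.mem_append, List.mem_singleton]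
    rintro (h | h)
    · exact hs (p.fst_mem_support_of_mem_edges h)
    · exact hvw (Sym2.congr_right.mp (h.trans Sym2.eq_swap))
  obtain ⟨a, b, ha, hb, hab, habc⟩ := hch c hc (by simp [c]; omega)
  have hon : ∀ {x}, x ∈ c.support → x = s ∨ x ∈ p.support := by
    simp only [c, support_cons, support_concat, List.mem_cons, List.mem_append]
    tauto
  have hchord : ∀ b ∈ p.support, G.Adj s b → s(s, b) ∉ c.edges →
      ∃ b ∈ p.support, G.Adj s b ∧ b ≠ v ∧ b ≠ w := fun b hb hsb hsbc ↦
    ⟨b, hb, hsb, by rintro rfl; simp [c] at hsbc, by rintro rfl; simp [c, Sym2.eq_swap] at hsbc⟩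
  rcases hon ha with rfl | hap <;> rcases hon hb with rfl | hbp
  · exact (G.irrefl hab).elim
  · exact hchord b hbp hab habc
  · exact hchord a hap hab.symm (Sym2.eq_swap ▸ habc)
  · exact absurd (by simp [c, hpc.mem_edges hap hbp hab]) habc

theorem IsChordal.adj_snd_of_adj_ends (hch : IsChordal G) {p : G.Walk v w}
    (hp : p.IsPath) (hpc : p.IsChordless) (hlen : 2 ≤ p.length) (hs : s ∉ p.support)
    (hsv : G.Adj s v) (hsw : G.Adj s w) : G.Adj s p.snd := by
  classical
  induction hn : p.length using Nat.strong_induction_on generalizing w with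
  | _ n ih =>
  obtain ⟨b, hb, hsb, hbv, hbw⟩ := hch.exists_adj_inner_of_adj_ends hp hpc hlen hs hsv hsw
  -- recurse on the part of `p` up to the inner neighbour `b` of `s`
  set q := p.takeUntil b hb
  have hqsnd : q.snd = p.snd := snd_takeUntil hbv p hb
  have hqlen : q.length < n := hn ▸ length_takeUntil_lt_length hb hbw
  have hq0 : q.length ≠ 0 := fun h ↦ hbv (by simpa [h] using q.getVert_length.symm)
  rcases (Nat.one_le_iff_ne_zero.mpr hq0).eq_or_lt with hq1 | hq2
  · rwa [← hqsnd, snd, q.getVert_of_length_le hq1.ge]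
  · rw [← hqsnd]
    exact ih _ hqlen (hp.takeUntil hb) (hpc.of_isSubwalk hp (p.isSubwalk_takeUntil hb)) hq2
      (fun h ↦ hs (p.support_takeUntil_subset_support hb h)) hsb rfl

theorem IsChordal.isClique_commonNeighbors (hch : IsChordal G) (hvw : v ≠ w)
    (hnvw : ¬G.Adj v w) : G.IsClique (G.commonNeighbors v w) := by
  intro a ha b hb hab
  by_contra hnab
  rw [mem_commonNeighbors] at ha hb
  let p : G.Walk a b := cons ha.1.symm (cons hb.1 nil)
  have hp : p.IsPath := by simp [p, ha.1.ne', hab, hb.1.ne]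
  have hpc : p.IsChordless := by
    rw [isChordless_iff_forall_mem_edges]
    intro x y hx hy hxy
    simp only [p, support_cons, support_nil, List.mem_cons, List.not_mem_nil, or_false] at hx hy
    rcases hx with rfl | rfl | rfl <;> rcases hy with rfl | rfl | rfl <;>
      simp_all [p, Sym2.eq_swap, G.adj_comm]
  obtain ⟨c, hc, hwc, hca, hcb⟩ := hch.exists_adj_inner_of_adj_ends hp hpc (by simp [p])
    (by simp [p, ha.2.ne, hvw.symm, hb.2.ne]) ha.2 hb.2
  simp only [p, support_cons, support_nil, List.mem_cons, List.not_mem_nil, or_false] at hc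
  rcases hc with rfl | rfl | rfl
  exacts [hca rfl, hnvw hwc.symm, hcb rfl]

theorem IsChordal.exists_commonNeighbors_ssubset (hch : IsChordal G) {p : G.Walk v w}
    (hp : p.IsPath) (hpc : p.IsChordless) (hlen : 3 ≤ p.length) :
    ∃ a b, a ≠ b ∧ ¬G.Adj a b ∧ G.commonNeighbors v w ⊂ G.commonNeighbors a b := by
  cases p with
  | nil => simp at hlen
  | @cons _ x _ hvx q =>
  obtain ⟨hq, hvq⟩ := (cons_isPath_iff _ _).mp hp
  have hqc : q.IsChordless := hpc.of_isSubwalk hp (q.isSubwalk_cons hvx)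
  have hqlen : 2 ≤ q.length := by simp only [length_cons] at hlen; omega
  have hx : x ≠ (cons hvx q).penultimate := by
    simpa only [snd_cons] using hp.snd_ne_penultimate hlen
  have hsupp : ∀ {u}, u ∈ q.support → u ∈ (cons hvx q).support := fun h ↦ by simp [h]
  have hxq : x ≠ q.snd := fun h ↦ by
    simpa using (hq.getVert_eq_start_iff (i := 1) (by omega)).mp h.symm
  have hnwx : ¬G.Adj w x := fun h ↦
    hx (hp.eq_penultimate_of_mem_edges (hpc.mem_edges (end_mem_support _)
      (hsupp q.start_mem_support) h))
  have hsub : G.commonNeighbors v w ⊆ G.commonNeighbors v q.snd := by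
    intro u hu
    rw [mem_commonNeighbors] at hu ⊢
    have hup : u ∉ (cons hvx q).support := fun h ↦ hx <| by
      simpa only [snd_cons] using
        (hp.eq_snd_of_mem_edges (hpc.mem_edges (start_mem_support _) h hu.1)).symm.trans
          (hp.eq_penultimate_of_mem_edges (hpc.mem_edges (end_mem_support _) h hu.2))
    have hux : G.Adj u x := by
      simpa only [snd_cons] using
        hch.adj_snd_of_adj_ends hp hpc (by omega) hup hu.1.symm hu.2.symm
    exact ⟨hu.1, (hch.adj_snd_of_adj_ends hq hqc hqlen (fun h ↦ hup (hsupp h)) hux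
      hu.2.symm).symm⟩
  refine ⟨v, q.snd, fun h ↦ hvq (h ▸ q.getVert_mem_support 1), fun h ↦ hxq ?_,
    (Set.ssubset_iff_of_subset hsub).mpr ⟨x, ?_, fun h ↦ hnwx (G.mem_commonNeighbors.mp h).2⟩⟩
  · simpa only [snd_cons] using (hp.eq_snd_of_mem_edges (hpc.mem_edges (start_mem_support _)
      (hsupp (q.getVert_mem_support 1)) h)).symm
  · exact G.mem_commonNeighbors.mpr ⟨hvx, (q.adj_snd (not_nil_iff_lt_length.mpr (by omega))).symm⟩

theorem IsChordal.sup_edge_of_length_le_two (hch : IsChordal G) (hnvw : ¬G.Adj v w)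
    (hshort : ∀ p : G.Walk v w, p.IsPath → p.IsChordless → p.length ≤ 2) :
    IsChordal (G ⊔ edge v w) := by
  have hG : ∀ {x y} (p : (G ⊔ edge v w).Walk x y), s(v, w) ∉ p.edges →
      ∀ e ∈ p.edges, e ∈ G.edgeSet := by
    intro x y p hp e he
    have := p.edges_subset_edgeSet he
    rw [edgeSet_sup, edgeSet_edge, Set.mem_union] at this
    exact this.resolve_right fun h ↦ hp (h.1 ▸ he)
  intro u c hc hlen
  by_cases he : s(v, w) ∈ c.edges
  · obtain ⟨h, q, hcyc, hqlen, hsub⟩ := hc.exists_cons_of_mem_edges he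
    obtain ⟨hq, hvwq⟩ := (cons_isCycle_iff _ _).mp hcyc
    set r := (q.transfer G (hG q hvwq)).reverse
    have hr : ¬ r.IsChordless := fun hrc ↦ by
      have := hshort r (hq.transfer _).reverse hrc
      simp only [r, length_reverse, length_transfer, length_cons] at this hqlen
      omega
    rw [isChordless_iff_forall_mem_edges] at hr
    push Not at hr
    obtain ⟨a, b, ha, hb, hab, habr⟩ := hr
    simp only [r, support_reverse, List.mem_reverse, support_transfer, edges_reverse,
      edges_transfer] at ha hb habr
    have hmem : ∀ {x}, x ∈ q.support → x ∈ c.support := fun hx ↦ by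
      rw [← mem_verts_toSubgraph, ← hsub, mem_verts_toSubgraph]
      simp [hx]
    refine ⟨a, b, hmem ha, hmem hb, Or.inl hab, ?_⟩
    rw [← mem_edges_toSubgraph, ← hsub, mem_edges_toSubgraph, edges_cons, List.mem_cons]
    rintro (h | h)
    · exact hnvw (by rw [← SimpleGraph.mem_edgeSet, ← h]; exact hab)
    · exact habr h
  · obtain ⟨a, b, ha, hb, hab, habc⟩ :=
      hch (c.transfer G (hG c he)) (hc.transfer _) (by simpa using hlen)
    simp only [support_transfer, edges_transfer] at ha hb habc
    exact ⟨a, b, ha, hb, Or.inl hab, habc⟩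

theorem IsChordal.isExposedEdge_sup_edge (hch : IsChordal G)
    (hvw : v ≠ w) (hnvw : ¬G.Adj v w) (hne : (G.commonNeighbors v w).Nonempty) :
    IsExposedEdge (G ⊔ edge v w) v w := by
  apply isExposedEdge_of_isClique_commonNeighbors (by simp [edge_adj, hvw]) <;>
    rw [commonNeighbors_sup_edge]
  exacts [(hch.isClique_commonNeighbors hvw hnvw).mono le_sup_left, hne]

end Chordal

/-- A non-complete connected chordal graph admits a pair of non-adjacent vertices
`v, w` such that adding the edge `vw` keeps the graph chordal and makes `vw` exposed. -/
theorem exists_exposed_extension [Fintype V] (G : SimpleGraph V)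
    (hconn : G.Connected) (hchord : IsChordal G) (hnc : G ≠ ⊤) :
    ∃ v w : V, v ≠ w ∧ ¬ G.Adj v w ∧
      IsChordal (G ⊔ SimpleGraph.fromEdgeSet {s(v, w)}) ∧
      IsExposedEdge (G ⊔ SimpleGraph.fromEdgeSet {s(v, w)}) v w := by
  obtain ⟨a, b, hab, hnab, hcommon⟩ := hconn.exists_not_adj_commonNeighbors_nonempty hnc
  obtain ⟨⟨v, w⟩, ⟨hvw, hnvw⟩, hmax⟩ := Set.exists_max_image
    {p : V × V | p.1 ≠ p.2 ∧ ¬G.Adj p.1 p.2} (fun p ↦ (G.commonNeighbors p.1 p.2).ncard)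
    (Set.toFinite _) ⟨(a, b), hab, hnab⟩
  have hshort : ∀ p : G.Walk v w, p.IsPath → p.IsChordless → p.length ≤ 2 := by
    intro p hp hpc
    by_contra! hlen
    obtain ⟨x, y, hxy, hnxy, hss⟩ := hchord.exists_commonNeighbors_ssubset hp hpc hlen
    exact (hmax (x, y) ⟨hxy, hnxy⟩).not_gt (Set.ncard_lt_ncard hss)
  have hne : (G.commonNeighbors v w).Nonempty := by
    refine Set.nonempty_of_ncard_ne_zero (Nat.pos_iff_ne_zero.mp ?_)
    exact (hcommon.ncard_pos).trans_le (hmax (a, b) ⟨hab, hnab⟩)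
  exact ⟨v, w, hvw, hnvw, hchord.sup_edge_of_length_le_two hnvw hshort,
    hchord.isExposedEdge_sup_edge hvw hnvw hne⟩
end

section
/- Let G be a finite simple chordal graph and v a vertex of G that belongs to some maximal clique of size at least three. Then v is incident on at least two distinct exposed edges of G. -/
variable {V : Type*}

/-!
If `w` is a neighbour of `v` that is simplicial in the subgraph induced on the neighbourhood
`N(v)` and not isolated there, then `{v, w} ∪ (N(v) ∩ N(w))` is the unique maximal clique
through `vw`, and it is not `{v, w}`: so `vw` is exposed. A maximal clique of size at least
three through `v` gives two adjacent neighbours of `v`, so the non-isolated part `T` of `N(v)`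
has at least two vertices, and Dirac's lemma (every chordal graph has a simplicial vertex
outside any given proper clique, here `∅` and then `{w₁}`) provides two simplicial vertices
of `T`. Dirac's lemma is proved by induction, splitting a non-complete chordal graph along a
clique separator.
-/

namespace SimpleGraph

namespace Walk

variable {G : SimpleGraph V}

theorem exists_length_lt_of_isChord {u v : V} (p : G.Walk u v) {e : Sym2 V} (he : p.IsChord e) :
    ∃ q : G.Walk u v, (∀ z ∈ q.support, z ∈ p.support) ∧ q.length < p.length := by
  classical
  induction e using Sym2.ind with | _ x y => ?_
  rw [isChord_sym2Mk] at he
  obtain ⟨hxy, hne, hx, hy⟩ := he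
  induction p with
  | nil => simp_all
  | @cons u w v h p ih =>
    have shortcut : ∀ y ∈ p.support, G.Adj u y → y ≠ w →
        ∃ q : G.Walk u v, (∀ z ∈ q.support, z ∈ (cons h p).support) ∧
          q.length < (cons h p).length := fun y hy huy hyw =>
      ⟨cons huy (p.dropUntil y hy),
        fun z hz => by
          simp only [support_cons, List.mem_cons] at hz ⊢
          exact hz.imp_right fun h => p.support_dropUntil_subset_support hy h,
        by simpa using length_dropUntil_lt_length hy hyw⟩
    simp only [support_cons, List.mem_cons, edges_cons] at hx hy hne
    rcases hx with rfl | hx <;> rcases hy with rfl | hy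
    · exact (G.irrefl hxy).elim
    · exact shortcut y hy hxy (by rintro rfl; simp at hne)
    · exact shortcut x hx hxy.symm (by rintro rfl; simp [Sym2.eq_swap] at hne)
    · obtain ⟨q, hq, hlt⟩ := ih (fun h' => hne (Or.inr h')) hx hy
      exact ⟨cons h q, by simp_all, by simpa using hlt⟩

theorem exists_isPath_isChordless {u v : V} (p : G.Walk u v) :
    ∃ q : G.Walk u v, q.IsPath ∧ q.IsChordless ∧ ∀ z ∈ q.support, z ∈ p.support := by
  classical
  induction hn : p.length using Nat.strong_induction_on generalizing p with | _ n ih => ?_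
  by_cases hc : p.IsChordless
  · by_cases hb : p.bypass.length < n
    · obtain ⟨q, hq, hqc, hqs⟩ := ih _ hb p.bypass rfl
      exact ⟨q, hq, hqc, fun z hz => p.support_bypass_subset_support (hqs z hz)⟩
    · rw [← p.bypass_eq_self_of_length_le_length_bypass (by omega)] at hc ⊢
      exact ⟨_, p.bypass_isPath, hc, fun _ hz => hz⟩
  · obtain ⟨e, he⟩ : ∃ e, p.IsChord e := by simpa [IsChordless] using hc
    obtain ⟨r, hr, hlt⟩ := p.exists_length_lt_of_isChord he
    obtain ⟨q, hq, hqc, hqs⟩ := ih _ (hn ▸ hlt) r rfl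
    exact ⟨q, hq, hqc, fun z hz => hr z (hqs z hz)⟩

end Walk

def ReachableIn (G : SimpleGraph V) (X : Set V) (u v : V) : Prop :=
  ∃ p : G.Walk u v, ∀ z ∈ p.support, z ∈ X

namespace ReachableIn

variable {G : SimpleGraph V} {X : Set V} {u v w : V}

theorem refl (hu : u ∈ X) : G.ReachableIn X u u := ⟨.nil, by simpa using hu⟩

theorem mem_right (h : G.ReachableIn X u v) : v ∈ X :=
  let ⟨p, hp⟩ := h; hp v p.end_mem_support

theorem symm (h : G.ReachableIn X u v) : G.ReachableIn X v u :=
  let ⟨p, hp⟩ := h; ⟨p.reverse, by simpa using hp⟩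

theorem trans (h : G.ReachableIn X u v) (h' : G.ReachableIn X v w) : G.ReachableIn X u w := by
  obtain ⟨p, hp⟩ := h
  obtain ⟨q, hq⟩ := h'
  exact ⟨p.append q, fun z hz => (Walk.mem_support_append_iff p q).1 hz |>.elim (hp z) (hq z)⟩

theorem step (h : G.ReachableIn X u v) (hvw : G.Adj v w) (hw : w ∈ X) : G.ReachableIn X u w :=
  h.trans ⟨hvw.toWalk, by simpa using ⟨h.mem_right, hw⟩⟩

end ReachableIn

end SimpleGraph

open SimpleGraph

variable {G : SimpleGraph V}

theorem IsChordal.not_isChordless (hG : IsChordal G) {u : V} {c : G.Walk u u} (hc : c.IsCycle)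
    (hlen : 4 ≤ c.length) : ¬ c.IsChordless := fun h => by
  obtain ⟨x, y, hx, hy, hxy, he⟩ := hG c hc hlen
  exact he (h.mem_edges hx hy hxy)

/-- A shortest such walk, closed up through `b`, would be a chordless cycle of length `≥ 4`. -/
theorem IsChordal.adj_of_walk_avoiding_neighbors (hG : IsChordal G) {b x y : V}
    (hbx : G.Adj b x) (hby : G.Adj b y) (hxy : x ≠ y) (p : G.Walk x y)
    (hp : ∀ z ∈ p.support, G.Adj b z ∨ z = b → z = x ∨ z = y) : G.Adj x y := by
  by_contra hn
  obtain ⟨q, hq, hqc, hqs⟩ := p.exists_isPath_isChordless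
  have hq_nbr : ∀ z ∈ q.support, G.Adj b z → z = x ∨ z = y :=
    fun z hz h => hp z (hqs z hz) (.inl h)
  have hbq : b ∉ q.support := fun h => by
    rcases hp b (hqs b h) (.inr rfl) with rfl | rfl <;> exact G.irrefl ‹_›
  have hlen : 2 ≤ q.length := by
    rcases q with _ | ⟨h, _ | ⟨_, _⟩⟩
    · exact (hxy rfl).elim
    · exact (hn h).elim
    · simp
  refine hG.not_isChordless (c := .cons hbx (q.concat hby.symm)) ?_
    (by simp only [Walk.length_cons, Walk.length_concat]; omega) ?_
  · rw [Walk.cons_isCycle_iff, Walk.concat_isPath_iff, Walk.edges_concat]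
    refine ⟨⟨hq, hbq⟩, ?_⟩
    simpa [hxy, hbx.ne'] using fun h => hbq (q.fst_mem_support_of_mem_edges h)
  · rw [Walk.isChordless_iff_forall_mem_edges]
    have hsupp : ∀ z ∈ (Walk.cons hbx (q.concat hby.symm)).support, z = b ∨ z ∈ q.support := by
      simp only [Walk.support_cons, Walk.support_concat, List.mem_cons, List.mem_append]
      tauto
    intro α β hα hβ hαβ
    rcases hsupp α hα with rfl | hαq <;> rcases hsupp β hβ with rfl | hβq
    · exact (G.irrefl hαβ).elim
    · rcases hq_nbr β hβq hαβ with rfl | rfl <;> simp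
    · rcases hq_nbr α hαq hαβ.symm with rfl | rfl <;> simp [Sym2.eq_swap]
    · simp [hqc.mem_edges hαq hβq hαβ]

/-- `A` is the component of `a` in `W` minus the closed neighbourhood of `b`, and `B` is the part
of `W` with no neighbour in `A`. The separator `W \ (A ∪ B)` lies in `N(b)` and any two of its
vertices are joined through `A`, hence adjacent. -/
theorem IsChordal.exists_clique_separator (hG : IsChordal G) {W : Set V} (hW : ¬ G.IsClique W) :
    ∃ A B : Set V, A.Nonempty ∧ B.Nonempty ∧ A ⊆ W ∧ B ⊆ W ∧ Disjoint A B ∧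
      (∀ u ∈ A, ∀ z ∈ B, ¬ G.Adj u z) ∧ G.IsClique (W \ (A ∪ B)) := by
  obtain ⟨a, ha, b, hb, hab, hnab⟩ : ∃ a ∈ W, ∃ b ∈ W, a ≠ b ∧ ¬ G.Adj a b := by
    simpa [IsClique, Set.Pairwise] using hW
  set X := W \ insert b (G.neighborSet b)
  set A := {z | G.ReachableIn X a z}
  have hAX : A ⊆ X := fun z hz => hz.mem_right
  have hbA : ∀ u ∈ A, ¬ G.Adj u b := fun u hu h => (hAX hu).2 (.inr h.symm)
  have hA_nbr : ∀ u ∈ A, ∀ z ∈ W, G.Adj u z → z ∉ A → G.Adj b z := by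
    intro u hu z hz huz hzA
    by_contra hbz
    have hzb : z ≠ b := by rintro rfl; exact hbA u hu huz
    exact hzA (ReachableIn.step hu huz ⟨hz, by simp [hzb, hbz]⟩)
  refine ⟨A, {z ∈ W | z ∉ A ∧ ∀ u ∈ A, ¬ G.Adj u z}, ⟨a, .refl ⟨ha, ?_⟩⟩,
    ⟨b, hb, fun h => (hAX h).2 (.inl rfl), hbA⟩, fun z hz => (hAX hz).1, fun z hz => hz.1,
    Set.disjoint_left.2 fun z hz h => h.2.1 hz, fun u hu z hz => hz.2.2 u hu, ?_⟩
  · simp [hab, G.adj_comm, hnab]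
  have hS : ∀ z ∈ W \ (A ∪ {z ∈ W | z ∉ A ∧ ∀ u ∈ A, ¬ G.Adj u z}),
      G.Adj b z ∧ ∃ u ∈ A, G.Adj u z := by
    rintro z ⟨hzW, hz⟩
    simp only [Set.mem_union, Set.mem_ofPred_eq, not_or, not_and, not_forall, not_not] at hz
    obtain ⟨u, hu, huz⟩ := hz.2 hzW hz.1
    exact ⟨hA_nbr u hu z hzW huz hz.1, u, hu, huz⟩
  intro x hx y hy hxy
  obtain ⟨hbx, ux, hux, hxux⟩ := hS x hx
  obtain ⟨hby, uy, huy, hyuy⟩ := hS y hy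
  obtain ⟨r, hr⟩ := (ReachableIn.symm hux).trans huy
  refine hG.adj_of_walk_avoiding_neighbors hbx hby hxy (.cons hxux.symm (r.concat hyuy))
    fun z hz hbz => ?_
  simp only [Walk.support_cons, Walk.support_concat, List.mem_cons, List.mem_append,
    List.not_mem_nil, or_false] at hz
  rcases hz with rfl | hz | rfl
  · exact .inl rfl
  · exact ((hr z hz).2 (hbz.symm.imp id id)).elim
  · exact .inr rfl

/-- Dirac's lemma, in the form with an avoided clique `K` that makes the induction go through:
the recursion is on one side of a clique separator together with the separator as `K`. -/
theorem IsChordal.exists_simplicial_mem_sdiff (hG : IsChordal G) {W K : Set V} (hW : W.Finite)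
    (hK : G.IsClique K) (hWK : (W \ K).Nonempty) :
    ∃ x ∈ W \ K, G.IsClique (G.neighborSet x ∩ W) := by
  induction hn : W.ncard using Nat.strong_induction_on generalizing W K with | _ n ih => ?_
  by_cases hWc : G.IsClique W
  · obtain ⟨x, hx⟩ := hWK
    exact ⟨x, hx, hWc.subset Set.inter_subset_right⟩
  have side : ∀ C D : Set V, C.Nonempty → D.Nonempty → C ⊆ W → D ⊆ W → Disjoint C D →
      (∀ u ∈ C, ∀ z ∈ D, ¬ G.Adj u z) → G.IsClique (W \ (C ∪ D)) → Disjoint C K →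
      ∃ x ∈ W \ K, G.IsClique (G.neighborSet x ∩ W) := by
    rintro C D ⟨c, hc⟩ ⟨d, hd⟩ hCW hDW hCD hCD_adj hS hCK
    have hlt : (W \ D).ncard < n :=
      hn ▸ Set.ncard_lt_ncard ⟨Set.sdiff_subset, fun h => (h (hDW hd)).2 hd⟩ hW
    obtain ⟨x, ⟨⟨hxW, hxD⟩, hxS⟩, hx⟩ := ih _ hlt hW.sdiff hS
      ⟨c, ⟨hCW hc, Set.disjoint_left.1 hCD hc⟩, fun h => h.2 (.inl hc)⟩ rfl
    have hxC : x ∈ C := by by_contra hxC; exact hxS ⟨hxW, by simp [hxC, hxD]⟩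
    refine ⟨x, ⟨hxW, Set.disjoint_left.1 hCK hxC⟩, hx.subset ?_⟩
    rintro z ⟨hxz, hzW⟩
    exact ⟨hxz, hzW, fun hzD => hCD_adj x hxC z hzD hxz⟩
  obtain ⟨A, B, hA, hB, hAW, hBW, hAB, hAB_adj, hS⟩ := hG.exists_clique_separator hWc
  by_cases hAK : Disjoint A K
  · exact side A B hA hB hAW hBW hAB hAB_adj hS hAK
  refine side B A hB hA hBW hAW hAB.symm (fun u hu z hz h => hAB_adj z hz u hu h.symm)
    (Set.union_comm A B ▸ hS) (Set.disjoint_left.2 fun k hkB hkK => hAK ?_)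
  refine Set.disjoint_left.2 fun k' hk'A hk'K => hAB_adj k' hk'A k hkB ?_
  exact hK hk'K hkK fun h => Set.disjoint_left.1 hAB hk'A (h ▸ hkB)

theorem isExposedEdge_of_isClique_neighborSet_inter {u v w : V} (hvw : G.Adj v w)
    (hvu : G.Adj v u) (hwu : G.Adj w u) (h : G.IsClique (G.neighborSet v ∩ G.neighborSet w)) :
    IsExposedEdge G v w := by
  set Q := insert v (insert w (G.neighborSet v ∩ G.neighborSet w))
  have hQ : G.IsClique Q := by
    refine isClique_insert.2 ⟨isClique_insert.2 ⟨h, fun z hz _ => hz.2⟩, ?_⟩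
    rintro z (rfl | hz) _
    exacts [hvw, hz.1]
  have hsub : ∀ t, G.IsClique t → v ∈ t → w ∈ t → t ⊆ Q := by
    intro t ht hv hw z hz
    by_cases hzv : z = v
    · exact .inl hzv
    by_cases hzw : z = w
    · exact .inr (.inl hzw)
    exact .inr (.inr ⟨ht hv hz (Ne.symm hzv), ht hw hz (Ne.symm hzw)⟩)
  have hQmax : IsMaxClique G Q :=
    ⟨hQ, fun t ht hQt => (hsub t ht (hQt (.inl rfl)) (hQt (.inr (.inl rfl)))).antisymm hQt⟩
  refine ⟨hvw, ⟨Q, ⟨hQmax, .inl rfl, .inr (.inl rfl)⟩, fun t ⟨ht, hv, hw⟩ =>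
    (ht.2 Q hQ (hsub t ht.1 hv hw)).symm⟩, fun ⟨_, hf⟩ => ?_⟩
  have huQ : u ∈ Q := .inr (.inr ⟨hvu, hwu⟩)
  rw [hf.2 Q hQ (Set.insert_subset (.inl rfl) (by simp [Q]))] at huQ
  rcases huQ with rfl | rfl
  exacts [G.irrefl hvu, G.irrefl hwu]

theorem IsChordal.two_exposed_edges_of_triangle [Finite V] (hG : IsChordal G) {v u₁ u₂ : V}
    (h₁ : G.Adj v u₁) (h₂ : G.Adj v u₂) (h₁₂ : G.Adj u₁ u₂) :
    ∃ w₁ w₂ : V, w₁ ≠ w₂ ∧ IsExposedEdge G v w₁ ∧ IsExposedEdge G v w₂ := by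
  set T := {x | G.Adj v x ∧ ∃ u, G.Adj v u ∧ G.Adj x u}
  have exposed : ∀ x ∈ T, G.IsClique (G.neighborSet x ∩ T) → IsExposedEdge G v x := by
    rintro x ⟨hvx, u, hvu, hxu⟩ hx
    refine isExposedEdge_of_isClique_neighborSet_inter hvx hvu hxu (hx.subset ?_)
    exact fun z hz => ⟨hz.2, hz.1, x, hvx, hz.2.symm⟩
  have hu₁ : u₁ ∈ T := ⟨h₁, u₂, h₂, h₁₂⟩
  have hu₂ : u₂ ∈ T := ⟨h₂, u₁, h₁, h₁₂.symm⟩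
  obtain ⟨w₁, ⟨hw₁, -⟩, hs₁⟩ :=
    hG.exists_simplicial_mem_sdiff T.toFinite isClique_empty ⟨u₁, hu₁, Set.notMem_empty u₁⟩
  have hT : (T \ {w₁}).Nonempty := by
    by_cases h : u₁ = w₁
    exacts [⟨u₂, hu₂, fun h' => h₁₂.ne (h.trans h'.symm)⟩, ⟨u₁, hu₁, h⟩]
  obtain ⟨w₂, ⟨hw₂, hne⟩, hs₂⟩ :=
    hG.exists_simplicial_mem_sdiff T.toFinite (isClique_singleton w₁) hT
  exact ⟨w₁, w₂, fun h => hne h.symm, exposed w₁ hw₁ hs₁, exposed w₂ hw₂ hs₂⟩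

/-- If a vertex `v` of a finite chordal graph belongs to a maximal clique of size at
least three, then `v` is incident on at least two distinct exposed edges. -/
theorem two_exposed_edges_at_vertex [Fintype V] (G : SimpleGraph V)
    (hchord : IsChordal G) (v : V) (s : Set V)
    (hs : IsMaxClique G s) (hv : v ∈ s) (hcard : 3 ≤ s.ncard) :
    ∃ w₁ w₂ : V, w₁ ≠ w₂ ∧ IsExposedEdge G v w₁ ∧ IsExposedEdge G v w₂ := by
  have hcard' : 1 < (s \ {v}).ncard := by
    have := Set.ncard_sdiff_singleton_add_one hv s.toFinite
    omega
  obtain ⟨u₁, u₂, ⟨hu₁, hu₁v⟩, ⟨hu₂, hu₂v⟩, hne⟩ :=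
    (Set.one_lt_ncard_iff (s \ {v}).toFinite).1 hcard'
  exact hchord.two_exposed_edges_of_triangle (hs.1 hv hu₁ (Ne.symm hu₁v))
    (hs.1 hv hu₂ (Ne.symm hu₂v)) (hs.1 hu₁ hu₂ hne)
end

section
/- Let G be a finite simple chordal graph. Then every exposed edge of G is contained in a cycle of G all of whose edges are exposed. -/
/-!
An edge `xy` is exposed iff `x` and `y` have a common neighbour and their common neighbours are
pairwise adjacent. Fix a common neighbour `z`. Walks of exposed edges from `y` to `z` avoiding `x`
and from `z` to `x` avoiding `y`, followed by `xy`, contain the required cycle.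

Such a walk exists for every triangle `uvf` of a chordal graph, from `u` to `v` avoiding `f`, by
induction on the number of vertices. If `uv` is not exposed, some vertex lies outside the
triangle, so by Dirac's lemma there is a simplicial vertex `s ∉ {u, v, f}`. A walk of exposed
edges in `G - s` lifts to `G`: deleting `s` only affects the edges inside the clique `N(s)`,
and these can be rerouted through `s`.
-/

variable {V : Type*}

open SimpleGraph Walk

section Exposed

variable {G : SimpleGraph V} {x y : V}

lemma exists_isMaxClique_superset [Finite V] {c : Set V} (hc : G.IsClique c) :
    ∃ M, IsMaxClique G M ∧ c ⊆ M := by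
  obtain ⟨M, hcM, hM⟩ := Finite.exists_le_maximal (p := G.IsClique) hc
  exact ⟨M, ⟨hM.prop, fun t ht hMt => (hM.eq_of_subset ht hMt).symm⟩, hcM⟩

lemma IsExposedEdge.symm (h : IsExposedEdge G x y) : IsExposedEdge G y x := by
  obtain ⟨hxy, ⟨s, hs, huniq⟩, hfacet⟩ := h
  refine ⟨hxy.symm, ⟨s, ⟨hs.1, hs.2.2, hs.2.1⟩, fun t ht => huniq t ⟨ht.1, ht.2.2, ht.2.1⟩⟩, ?_⟩
  rintro ⟨-, hmax⟩
  exact hfacet ⟨hxy, by rwa [Set.pair_comm]⟩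

/-- The unique maximal clique through `xy` is `{x, y} ∪ G.commonNeighbors x y`. -/
lemma isExposedEdge_of_isClique_commonNeighbors_s11 (hxy : G.Adj x y)
    (hne : (G.commonNeighbors x y).Nonempty) (hclique : G.IsClique (G.commonNeighbors x y)) :
    IsExposedEdge G x y := by
  obtain ⟨z, hz⟩ := hne
  set K := insert x (insert y (G.commonNeighbors x y))
  have hK : G.IsClique K := by
    refine isClique_insert.mpr ⟨isClique_insert.mpr ⟨hclique, fun w hw _ => ?_⟩, ?_⟩
    · exact (G.mem_commonNeighbors.mp hw).2
    · rintro w (rfl | hw) -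
      exacts [hxy, (G.mem_commonNeighbors.mp hw).1]
  have hsubK : ∀ t, G.IsClique t → x ∈ t → y ∈ t → t ⊆ K := by
    intro t ht hxt hyt w hwt
    by_cases hwx : w = x
    · exact Or.inl hwx
    by_cases hwy : w = y
    · exact Or.inr (Or.inl hwy)
    exact Or.inr (Or.inr (G.mem_commonNeighbors.mpr
      ⟨ht hxt hwt (Ne.symm hwx), ht hyt hwt (Ne.symm hwy)⟩))
  have hKmax : IsMaxClique G K := ⟨hK, fun t ht hKt =>
    Set.Subset.antisymm (hsubK t ht (hKt (by simp [K])) (hKt (by simp [K]))) hKt⟩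
  refine ⟨hxy, ⟨K, ⟨hKmax, by simp [K], by simp [K]⟩, fun t ⟨ht, hxt, hyt⟩ =>
    (ht.2 K hK (hsubK t ht.1 hxt hyt)).symm⟩, ?_⟩
  rintro ⟨-, hpair⟩
  have hzK : z ∈ ({x, y} : Set V) := hpair.2 K hK (by simp [K, Set.insert_subset_iff]) ▸
    Or.inr (Or.inr hz)
  rw [mem_commonNeighbors] at hz
  rcases hzK with rfl | rfl
  exacts [hz.1.ne rfl, hz.2.ne rfl]

theorem isExposedEdge_iff [Finite V] :
    IsExposedEdge G x y ↔
      G.Adj x y ∧ (G.commonNeighbors x y).Nonempty ∧ G.IsClique (G.commonNeighbors x y) := by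
  refine ⟨?_, fun ⟨hxy, hne, hclique⟩ => isExposedEdge_of_isClique_commonNeighbors_s11 hxy hne hclique⟩
  rintro ⟨hxy, ⟨S, ⟨hS, hxS, hyS⟩, huniq⟩, hfacet⟩
  have hmem : ∀ z ∈ G.commonNeighbors x y, z ∈ S := by
    intro z hz
    rw [mem_commonNeighbors] at hz
    have hxyz : G.IsClique {z, x, y} := by
      simp [isClique_insert, hz.1.symm, hz.2.symm, hxy]
    obtain ⟨M, hM, hsub⟩ := exists_isMaxClique_superset hxyz
    exact huniq M ⟨hM, hsub (by simp), hsub (by simp)⟩ ▸ hsub (by simp)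
  refine ⟨hxy, ?_, hS.1.subset hmem⟩
  by_contra hempty
  refine hfacet ⟨hxy, isClique_pair.mpr fun _ => hxy, fun t ht hsub => ?_⟩
  refine Set.Subset.antisymm_iff.mpr ⟨fun z hz => ?_, hsub⟩
  by_contra hz'
  simp only [Set.mem_insert_iff, Set.mem_singleton_iff, not_or] at hz'
  exact hempty ⟨z, G.mem_commonNeighbors.mpr
    ⟨ht (hsub (by simp)) hz (Ne.symm hz'.1), ht (hsub (by simp)) hz (Ne.symm hz'.2)⟩⟩

end Exposed

section Simplicial

variable {G : SimpleGraph V}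

def IsSimplicial (G : SimpleGraph V) (v : V) : Prop :=
  G.IsClique (G.neighborSet v)

lemma IsSimplicial.of_induce {U : Set V} {t : U} (ht : IsSimplicial (G.induce U) t)
    (hN : G.neighborSet t ⊆ U) : IsSimplicial G t :=
  fun a ha b hb hab => ht (x := ⟨a, hN ha⟩) (y := ⟨b, hN hb⟩) ha hb (by simpa using hab)

lemma IsSimplicial.isExposedEdge {s a b : V} (hs : IsSimplicial G s)
    (ha : G.Adj s a) (hb : G.Adj s b) (hab : a ≠ b) : IsExposedEdge G s a :=
  isExposedEdge_of_isClique_commonNeighbors_s11 ha ⟨b, G.mem_commonNeighbors.mpr ⟨hb, hs ha hb hab⟩⟩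
    (hs.subset (G.commonNeighbors_subset_neighborSet_left s a))

end Simplicial

lemma IsExposedEdge.of_induce [Finite V] {G : SimpleGraph V} {U : Set V} {a b : U}
    (h : IsExposedEdge (G.induce U) a b) (hU : G.commonNeighbors a b ⊆ U) :
    IsExposedEdge G a b := by
  obtain ⟨hab, ⟨z, hz⟩, hclique⟩ := isExposedEdge_iff.mp h
  refine isExposedEdge_iff.mpr ⟨hab, ⟨z, hz⟩, fun w hw w' hw' hww' => ?_⟩
  exact hclique (x := ⟨w, hU hw⟩) (y := ⟨w', hU hw'⟩) hw hw' (by simpa using hww')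

def exposedGraph (G : SimpleGraph V) : SimpleGraph V where
  Adj := IsExposedEdge G
  symm := ⟨fun _ _ => IsExposedEdge.symm⟩
  loopless := ⟨fun _ h => h.1.ne rfl⟩

@[simp]
lemma exposedGraph_adj {G : SimpleGraph V} {x y : V} :
    (exposedGraph G).Adj x y ↔ IsExposedEdge G x y :=
  Iff.rfl

lemma exposedGraph_le (G : SimpleGraph V) : exposedGraph G ≤ G :=
  fun _ _ h => (exposedGraph_adj.mp h).1

lemma SimpleGraph.Reachable.of_forall_adj {W : Type*} {G : SimpleGraph V} {H : SimpleGraph W}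
    (φ : W → V) (hφ : ∀ a b, H.Adj a b → G.Reachable (φ a) (φ b)) {a b : W}
    (hab : H.Reachable a b) : G.Reachable (φ a) (φ b) := by
  obtain ⟨p⟩ := hab
  induction p with
  | nil => rfl
  | cons h _ ih => exact (hφ _ _ h).trans ih

lemma IsSimplicial.reachable_of_adj_exposedGraph_induce [Finite V] {G : SimpleGraph V} {s : V}
    (hs : IsSimplicial G s) {f a b : ({s}ᶜ : Set V)}
    (h : ((exposedGraph (G.induce {s}ᶜ)).deleteIncidenceSet f).Adj a b) :
    ((exposedGraph G).deleteIncidenceSet f).Reachable a b := by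
  rw [deleteIncidenceSet_adj, exposedGraph_adj] at h
  obtain ⟨hab, haf, hbf⟩ := h
  have haf' : (a : V) ≠ f := Subtype.coe_injective.ne haf
  have hbf' : (b : V) ≠ f := Subtype.coe_injective.ne hbf
  have hsf : s ≠ f := fun h => f.2 h.symm
  by_cases hsab : G.Adj s a ∧ G.Adj s b
  · have hne : (a : V) ≠ b := (show G.Adj a b from hab.1).ne
    refine (Adj.reachable (v := s) ?_).trans (Adj.reachable ?_) <;>
      rw [deleteIncidenceSet_adj, exposedGraph_adj]
    · exact ⟨(hs.isExposedEdge hsab.1 hsab.2 hne).symm, haf', hsf⟩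
    · exact ⟨hs.isExposedEdge hsab.2 hsab.1 hne.symm, hsf, hbf'⟩
  · refine Adj.reachable
      (deleteIncidenceSet_adj.mpr ⟨exposedGraph_adj.mpr (hab.of_induce ?_), haf', hbf'⟩)
    rintro w hw rfl
    exact hsab ((G.mem_commonNeighbors.mp hw).imp Adj.symm Adj.symm)

section Chordal

variable {G : SimpleGraph V}

lemma SimpleGraph.Walk.exists_shorter_of_isChord {u v a b : V} {p : G.Walk u v}
    (h : p.IsChord s(a, b)) : ∃ q : G.Walk u v, q.length < p.length ∧ q.support ⊆ p.support := by
  classical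
  obtain ⟨hab, he, ha, hb⟩ := Walk.isChord_sym2Mk.mp h
  clear h
  induction p with
  | nil =>
    simp only [support_nil, List.mem_singleton] at ha hb
    exact absurd (ha ▸ hb ▸ hab) G.irrefl
  | @cons u m v hum p ih =>
    rw [edges_cons, List.mem_cons, not_or] at he
    have shortcut : ∀ {w}, w ∈ p.support → G.Adj u w → s(u, w) ≠ s(u, m) →
        ∃ q : G.Walk u v, q.length < (cons hum p).length ∧ q.support ⊆ (cons hum p).support := by
      intro w hw huw hne
      have hwm : w ≠ m := by rintro rfl; exact hne rfl
      exact ⟨cons huw (p.dropUntil w hw), by simpa using length_dropUntil_lt_length hw hwm,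
        List.cons_subset_cons _ (p.support_dropUntil_subset_support hw)⟩
    rw [support_cons, List.mem_cons] at ha hb
    by_cases ha' : a ∈ p.support <;> by_cases hb' : b ∈ p.support
    · obtain ⟨q, hlt, hsub⟩ := ih he.2 ha' hb'
      exact ⟨cons hum q, by simpa using hlt, List.cons_subset_cons _ hsub⟩
    · obtain rfl := hb.resolve_right hb'
      exact shortcut ha' hab.symm (by rw [Sym2.eq_swap]; exact he.1)
    · obtain rfl := ha.resolve_right ha'
      exact shortcut hb' hab he.1
    · exact absurd ((ha.resolve_right ha').trans (hb.resolve_right hb').symm ▸ hab) G.irrefl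

lemma IsChordal.induce (h : IsChordal G) (U : Set V) : IsChordal (G.induce U) := by
  intro v w hw hlen
  let f := Embedding.induce (G := G) U
  obtain ⟨a, b, ha, hb, hadj, hne⟩ := h (w.map f.toHom) (hw.map f.injective)
    (by rwa [Walk.length_map])
  rw [Walk.support_map, List.mem_map] at ha hb
  obtain ⟨a, ha, rfl⟩ := ha
  obtain ⟨b, hb, rfl⟩ := hb
  refine ⟨a, b, ha, hb, hadj, fun hmem => hne ?_⟩
  rw [edges_map, List.mem_map]
  exact ⟨s(a, b), hmem, Sym2.map_mk _ _ _⟩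

/-- Closing a shortest walk from `s` to `t` through `v` would otherwise give a chordless cycle
of length at least four. -/
theorem IsChordal.adj_of_walk (hG : IsChordal G) {v s t : V} (hs : G.Adj v s)
    (ht : G.Adj v t) (hst : s ≠ t) (p : G.Walk s t) (hvp : v ∉ p.support)
    (hp : ∀ z ∈ p.support, G.Adj v z → z = s ∨ z = t) : G.Adj s t := by
  induction hn : p.length using Nat.strong_induction_on generalizing p with
  | _ n ih =>
  classical
  by_contra hnadj
  set q := p.bypass
  have hqp : q.support ⊆ p.support := p.support_bypass_subset_support
  have hvq : v ∉ q.support := fun h => hvp (hqp h)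
  have hq_len : 2 ≤ q.length := by
    by_contra! hlt
    interval_cases hq : q.length
    exacts [hst (eq_of_length_eq_zero hq), hnadj (adj_of_length_eq_one hq)]
  set c := cons hs (q.concat ht.symm)
  have hc : c.IsCycle := by
    refine (cons_isCycle_iff _ hs).mpr ⟨p.bypass_isPath.concat hvq ht.symm, ?_⟩
    rw [edges_concat, List.concat_eq_append, List.mem_append, List.mem_singleton, not_or]
    refine ⟨fun h => hvq (q.fst_mem_support_of_mem_edges h), fun h => ?_⟩
    rcases Sym2.eq_iff.mp h with ⟨rfl, -⟩ | ⟨-, rfl⟩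
    exacts [G.irrefl ht, hst rfl]
  obtain ⟨a, b, ha, hb, hab, he⟩ := hG c hc (by simp only [c, length_cons, length_concat]; omega)
  have hc_support : ∀ z ∈ c.support, z = v ∨ z ∈ q.support := by
    simp [c, support_concat, or_comm]
  have hc_edges : s(v, s) ∈ c.edges ∧ s(v, t) ∈ c.edges := by
    simp [c, edges_concat, Sym2.eq_swap]
  have hnot_v : ∀ {a b}, b ∈ c.support → G.Adj a b → s(a, b) ∉ c.edges → a ≠ v := by
    rintro a b hb hab he rfl
    rcases hc_support b hb with rfl | hbq
    · exact G.irrefl hab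
    rcases hp b (hqp hbq) hab with rfl | rfl
    exacts [he hc_edges.1, he hc_edges.2]
  have haq := (hc_support a ha).resolve_left (hnot_v hb hab he)
  have hbq := (hc_support b hb).resolve_left (hnot_v ha hab.symm (by rwa [Sym2.eq_swap]))
  have hchord : q.IsChord s(a, b) := Walk.isChord_sym2Mk.mpr ⟨hab, fun h => he (by
    simp [c, edges_concat, h]), haq, hbq⟩
  obtain ⟨q', hlt, hsub⟩ := Walk.exists_shorter_of_isChord hchord
  exact hnadj (ih _ (hn ▸ hlt.trans_le p.length_bypass_le_length) q' (fun h => hvq (hsub h))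
    (fun z hz => hp z (hqp (hsub hz))) rfl)

end Chordal

section Dirac

variable {G : SimpleGraph V}

def reachableWithin (G : SimpleGraph V) (X : Set V) (q : V) : Set V :=
  {c | ∃ p : G.Walk q c, ∀ z ∈ p.support, z ∈ X}

lemma reachableWithin_subset {X : Set V} {q : V} : reachableWithin G X q ⊆ X :=
  fun _ ⟨p, hp⟩ => hp _ p.end_mem_support

lemma mem_reachableWithin_self {X : Set V} {q : V} (hq : q ∈ X) : q ∈ reachableWithin G X q :=
  ⟨nil, by simpa using hq⟩

lemma mem_reachableWithin_of_adj {X : Set V} {q c d : V} (hc : c ∈ reachableWithin G X q)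
    (hcd : G.Adj c d) (hd : d ∈ X) : d ∈ reachableWithin G X q := by
  obtain ⟨p, hp⟩ := hc
  refine ⟨p.concat hcd, fun z hz => ?_⟩
  rw [support_concat, List.mem_append, List.mem_singleton] at hz
  exact hz.elim (hp z) (· ▸ hd)

lemma exists_walk_of_mem_reachableWithin {X : Set V} {q c c' : V}
    (hc : c ∈ reachableWithin G X q) (hc' : c' ∈ reachableWithin G X q) :
    ∃ p : G.Walk c c', ∀ z ∈ p.support, z ∈ X := by
  obtain ⟨p, hp⟩ := hc
  obtain ⟨p', hp'⟩ := hc'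
  refine ⟨p.reverse.append p', fun z hz => ?_⟩
  rw [mem_support_append_iff, support_reverse, List.mem_reverse] at hz
  exact hz.elim (hp z) (hp' z)

/-- The neighbours of `v` that are attached to one component of `G - N[v]` form a clique. -/
lemma IsChordal.isClique_attachments (hG : IsChordal G) (v q : V) :
    G.IsClique {t | G.Adj v t ∧
      ∃ c ∈ reachableWithin G (insert v (G.neighborSet v))ᶜ q, G.Adj c t} := by
  rintro t ⟨hvt, c, hc, hct⟩ t' ⟨hvt', c', hc', hct'⟩ htt'
  obtain ⟨p, hp⟩ := exists_walk_of_mem_reachableWithin hc hc'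
  have hpv : ∀ z ∈ p.support, z ≠ v ∧ ¬G.Adj v z := by
    simpa [not_or] using hp
  refine hG.adj_of_walk hvt hvt' htt' (cons hct.symm (p.concat hct')) ?_ ?_
  all_goals
    simp only [support_cons, support_concat, List.mem_cons, List.mem_append, List.not_mem_nil,
      or_false]
  · rintro (h | h | h)
    exacts [hvt.ne h, (hpv v h).1 rfl, hvt'.ne h]
  · rintro z (rfl | hz | rfl) hvz
    exacts [Or.inl rfl, ((hpv z hz).2 hvz).elim, Or.inr rfl]

lemma exists_subset_insert_neighborSet_of_isClique {K : Set V} (hK : G.IsClique K)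
    (hG : G ≠ ⊤) :
    ∃ v q : V, q ∉ insert v (G.neighborSet v) ∧ K ⊆ insert v (G.neighborSet v) := by
  obtain ⟨a, b, hab, hnadj⟩ := ne_top_iff_exists_not_adj.mp hG
  by_cases hKa : K ⊆ insert a (G.neighborSet a)
  · exact ⟨a, b, by simp [Ne.symm hab, hnadj], hKa⟩
  obtain ⟨k, hkK, hka⟩ := Set.not_subset.mp hKa
  simp only [Set.mem_insert_iff, mem_neighborSet, not_or] at hka
  refine ⟨k, a, by simp [Ne.symm hka.1, G.adj_comm k a, hka.2], fun k' hk' => ?_⟩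
  by_cases h : k' = k
  exacts [Or.inl h, Or.inr (hK hkK hk' (Ne.symm h))]

/-- Dirac's lemma. If `G` is not complete, pick `v` with `K ⊆ N[v] ≠ V` and a component `C` of
`G - N[v]`. Its attachments `S` form a clique, so by induction `G[C ∪ S]` has a simplicial
vertex in `C`; it is simplicial in `G` because all its neighbours lie in `C ∪ S`. -/
theorem IsChordal.exists_isSimplicial_notMem [Finite V] (hG : IsChordal G) {K : Set V}
    (hK : G.IsClique K) {x : V} (hx : x ∉ K) : ∃ s ∉ K, IsSimplicial G s := by
  induction hn : Nat.card V using Nat.strong_induction_on generalizing V with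
  | _ n ih =>
  by_cases htop : G = ⊤
  · subst htop
    exact ⟨x, hx, IsClique.top _⟩
  obtain ⟨v, q, hq, hKv⟩ := exists_subset_insert_neighborSet_of_isClique hK htop
  set X := (insert v (G.neighborSet v))ᶜ
  set C := reachableWithin G X q
  set S := {t | G.Adj v t ∧ ∃ c ∈ C, G.Adj c t}
  have hqC : q ∈ C := mem_reachableWithin_self hq
  have hCS : ∀ c ∈ C, G.neighborSet c ⊆ C ∪ S := by
    intro c hc d hcd
    by_cases hd : d ∈ X
    · exact Or.inl (mem_reachableWithin_of_adj hc hcd hd)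
    have hcX := reachableWithin_subset hc
    rw [Set.notMem_compl_iff, Set.mem_insert_iff] at hd
    simp only [X, Set.mem_compl_iff, Set.mem_insert_iff, mem_neighborSet, not_or] at hcX
    rcases hd with rfl | hvd
    · exact absurd (G.adj_symm hcd) hcX.2
    · exact Or.inr ⟨hvd, c, hc, hcd⟩
  have hvCS : v ∉ C ∪ S := by
    rintro (hv | hv)
    exacts [reachableWithin_subset hv (Set.mem_insert v _), G.irrefl hv.1]
  have hcard : Nat.card ↥(C ∪ S) < n :=
    hn ▸ Set.ncard_lt_card fun h => hvCS (h ▸ Set.mem_univ v)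
  obtain ⟨t, htS, ht⟩ := ih _ hcard (hG.induce (C ∪ S))
    (K := Subtype.val ⁻¹' S) (fun a ha b hb hab => hG.isClique_attachments v q ha hb
      (Subtype.coe_injective.ne hab)) (x := ⟨q, Or.inl hqC⟩)
    (fun h => hq (Set.mem_insert_of_mem v h.1)) rfl
  have htC : (t : V) ∈ C := t.2.resolve_right htS
  exact ⟨t, fun htK => reachableWithin_subset htC (hKv htK), ht.of_induce (hCS t htC)⟩

end Dirac

lemma exists_commonNeighbor_ne_of_not_isExposedEdge [Finite V] {G : SimpleGraph V} {u v f : V}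
    (hexp : ¬IsExposedEdge G u v) (huv : G.Adj u v) (hf : f ∈ G.commonNeighbors u v) :
    ∃ z ∈ G.commonNeighbors u v, z ≠ f := by
  obtain ⟨z, hz, z', hz', hzz', -⟩ : ∃ z ∈ G.commonNeighbors u v, ∃ z' ∈ G.commonNeighbors u v,
      z ≠ z' ∧ ¬G.Adj z z' := by
    by_contra! h
    exact hexp (isExposedEdge_iff.mpr ⟨huv, ⟨f, hf⟩, fun z hz z' hz' => h z hz z' hz'⟩)
  by_cases hzf : z = f
  exacts [⟨z', hz', hzf ▸ hzz'.symm⟩, ⟨z, hz, hzf⟩]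

theorem IsChordal.reachable_exposedGraph_deleteIncidenceSet [Finite V] {G : SimpleGraph V}
    (hG : IsChordal G) {u v f : V} (huv : G.Adj u v) (huf : G.Adj u f) (hvf : G.Adj v f) :
    ((exposedGraph G).deleteIncidenceSet f).Reachable u v := by
  induction hn : Nat.card V using Nat.strong_induction_on generalizing V with
  | _ n ih =>
  by_cases hexp : IsExposedEdge G u v
  · exact Adj.reachable (deleteIncidenceSet_adj.mpr ⟨hexp, huf.ne, hvf.ne⟩)
  obtain ⟨z, hz, hzf⟩ := exists_commonNeighbor_ne_of_not_isExposedEdge hexp huv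
    (G.mem_commonNeighbors.mpr ⟨huf, hvf⟩)
  rw [mem_commonNeighbors] at hz
  have hK : G.IsClique {u, v, f} := by
    simp [isClique_insert, huv, huf, hvf, huv.ne, huf.ne, hvf.ne]
  obtain ⟨s, hsK, hs⟩ := hG.exists_isSimplicial_notMem hK (x := z)
    (by simp [hz.1.ne', hz.2.ne', hzf])
  simp only [Set.mem_insert_iff, Set.mem_singleton_iff, not_or] at hsK
  have hcard : Nat.card ↥({s}ᶜ : Set V) < n :=
    hn ▸ Set.ncard_lt_card fun h => (h ▸ Set.mem_univ s : s ∈ ({s}ᶜ : Set V)) rfl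
  have hreach := ih _ hcard (hG.induce {s}ᶜ) (u := ⟨u, Ne.symm hsK.1⟩)
    (v := ⟨v, Ne.symm hsK.2.1⟩) (f := ⟨f, Ne.symm hsK.2.2⟩) huv huf hvf rfl
  exact hreach.of_forall_adj Subtype.val fun _ _ h => hs.reachable_of_adj_exposedGraph_induce h

lemma deleteIncidenceSet_le_deleteEdges {G : SimpleGraph V} {x : V} {e : Sym2 V} (hx : x ∈ e) :
    G.deleteIncidenceSet x ≤ G.deleteEdges {e} := by
  intro a b h
  rw [deleteIncidenceSet_adj] at h
  refine (deleteEdges_adj ..).mpr ⟨h.1, fun he => ?_⟩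
  rw [← Set.mem_singleton_iff.mp he, Sym2.mem_iff] at hx
  exact hx.elim h.2.1.symm h.2.2.symm

/-- In a finite chordal graph, every exposed edge lies on a cycle all of whose edges
are exposed. -/
theorem exposed_edge_mem_exposed_cycle [Fintype V] (G : SimpleGraph V)
    (hchord : IsChordal G) (x y : V) (h : IsExposedEdge G x y) :
    ∃ (v : V) (w : G.Walk v v), w.IsCycle ∧ s(x, y) ∈ w.edges ∧
      ∀ a b : V, s(a, b) ∈ w.edges → IsExposedEdge G a b := by
  obtain ⟨hxy, ⟨z, hz⟩, -⟩ := isExposedEdge_iff.mp h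
  rw [mem_commonNeighbors] at hz
  have hyz := hchord.reachable_exposedGraph_deleteIncidenceSet hz.2 hxy.symm hz.1.symm
  have hzx := hchord.reachable_exposedGraph_deleteIncidenceSet hz.1.symm hz.2.symm hxy
  have hyx : ((exposedGraph G).deleteEdges {s(y, x)}).Reachable y x :=
    (hyz.mono (deleteIncidenceSet_le_deleteEdges (Sym2.mem_mk_right y x))).trans
      (hzx.mono (deleteIncidenceSet_le_deleteEdges (Sym2.mem_mk_left y x)))
  obtain ⟨u, c, hc, hyxc⟩ :=
    adj_and_reachable_delete_edges_iff_exists_cycle.mp ⟨exposedGraph_adj.mpr h.symm, hyx⟩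
  refine ⟨u, c.mapLe (exposedGraph_le G), hc.mapLe _, ?_, fun a b hab => ?_⟩
  · rwa [edges_mapLe_eq_edges, Sym2.eq_swap]
  · rw [edges_mapLe_eq_edges] at hab
    exact c.adj_of_mem_edges hab
end

section
/- Let G be a finite simple graph, u a vertex of G, and x, y two vertices of G distinct from u with xy an edge of G, such that not both x and y lie in the closed neighborhood N_G[u]. Then xy is an exposed edge of the vertex-deleted graph G − u if and only if xy is an exposed edge of G. -/
/-!
A clique of `G` containing `u`, `x` and `y` would put `x` and `y` in the closed neighborhood
of `u`, so every clique through `x` and `y` avoids `u`. Hence the inclusion `G − u → G`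
matches the maximal cliques through `xy` on both sides, and `{x, y}` is maximal in one graph
iff it is in the other.
-/

variable {V : Type*}

lemma Set.existsUnique_image_val_iff {W : Set V} {P : Set V → Prop} :
    (∃! s : Set W, P (Subtype.val '' s)) ↔ ∃! S : Set V, S ⊆ W ∧ P S := by
  have lift_of_subset : ∀ S : Set V, S ⊆ W → ∃ s : Set W, Subtype.val '' s = S :=
    fun S hS => Set.subset_range_iff_exists_image_eq.mp (by simpa using hS)
  constructor
  · rintro ⟨s, hs, huniq⟩
    refine ⟨_, ⟨by simp, hs⟩, fun S ⟨hSW, hS⟩ => ?_⟩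
    obtain ⟨t, rfl⟩ := lift_of_subset S hSW
    rw [huniq t hS]
  · rintro ⟨S, ⟨hSW, hS⟩, huniq⟩
    obtain ⟨s, rfl⟩ := lift_of_subset S hSW
    exact ⟨s, hS, fun t ht => Subtype.val_injective.image_injective (huniq _ ⟨by simp, ht⟩)⟩

namespace SimpleGraph

variable {G : SimpleGraph V} {W : Set V}

lemma isMaxClique_induce_iff {s : Set W}
    (hW : ∀ t : Set V, G.IsClique t → Subtype.val '' s ⊆ t → t ⊆ W) :
    IsMaxClique (G.induce W) s ↔ IsMaxClique G (Subtype.val '' s) := by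
  rw [IsMaxClique, IsMaxClique, isClique_induce_iff]
  refine and_congr_right fun _ => ⟨fun hmax t ht hst => ?_, fun hmax t ht hst => ?_⟩
  · have htW : t ⊆ Set.range (Subtype.val : W → V) := by simpa using hW t ht hst
    rw [← Set.image_preimage_eq_of_subset htW,
      hmax _ (isClique_induce_iff.mpr (by rwa [Set.image_preimage_eq_of_subset htW]))
        (Set.image_subset_iff.mp hst)]
  · exact Subtype.val_injective.image_injective
      (hmax _ (isClique_induce_iff.mp ht) (Set.image_mono hst))

lemma isFacetEdge_induce_iff {x y : W}
    (hW : ∀ t : Set V, G.IsClique t → ↑x ∈ t → ↑y ∈ t → t ⊆ W) :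
    IsFacetEdge (G.induce W) x y ↔ IsFacetEdge G x y := by
  have hxy : Subtype.val '' ({x, y} : Set W) = {↑x, ↑y} := Set.image_pair _ _ _
  rw [IsFacetEdge, IsFacetEdge, comap_adj, isMaxClique_induce_iff, hxy]
  · rfl
  · rw [hxy]
    exact fun t ht hxyt => hW t ht (hxyt (by simp)) (hxyt (by simp))

theorem isExposedEdge_induce_iff {x y : W}
    (hW : ∀ t : Set V, G.IsClique t → ↑x ∈ t → ↑y ∈ t → t ⊆ W) :
    IsExposedEdge (G.induce W) x y ↔ IsExposedEdge G x y := by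
  have hmax : ∀ s : Set W, (IsMaxClique (G.induce W) s ∧ x ∈ s ∧ y ∈ s) ↔
      (IsMaxClique G (Subtype.val '' s) ∧
        ↑x ∈ Subtype.val '' s ∧ ↑y ∈ Subtype.val '' s) := by
    intro s
    simp only [Subtype.val_injective.mem_set_image]
    refine and_congr_left fun ⟨hx, hy⟩ => isMaxClique_induce_iff fun t ht hst => ?_
    exact hW t ht (hst ⟨x, hx, rfl⟩) (hst ⟨y, hy, rfl⟩)
  rw [IsExposedEdge, IsExposedEdge, comap_adj, isFacetEdge_induce_iff hW,
    existsUnique_congr hmax,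
    Set.existsUnique_image_val_iff (P := fun S => IsMaxClique G S ∧ ↑x ∈ S ∧ ↑y ∈ S)]
  refine and_congr_right fun _ => and_congr_left fun _ => existsUnique_congr fun S => ?_
  exact and_iff_right_of_imp fun ⟨hS, hx, hy⟩ => hW S hS.1 hx hy

lemma subset_insert_neighborSet_of_isClique {s : Set V} {u : V}
    (hs : G.IsClique s) (hu : u ∈ s) :
    s ⊆ insert u (G.neighborSet u) := fun v hv =>
  (eq_or_ne u v).elim (fun h => h ▸ Set.mem_insert u _) fun h => Or.inr (hs hu hv h)

end SimpleGraph

/-- Let `u` be a vertex of `G` and `xy` an edge of `G` with `x, y ≠ u` and not both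
`x` and `y` in the closed neighborhood of `u`. Then `xy` is exposed in the
vertex-deleted graph `G − u` if and only if `xy` is exposed in `G`. -/
theorem isExposedEdge_deleteVertex_iff (G : SimpleGraph V)
    (u x y : V) (hx : x ≠ u) (hy : y ≠ u)
    (hN : ¬ (x ∈ insert u (G.neighborSet u) ∧ y ∈ insert u (G.neighborSet u))) :
    IsExposedEdge (G.induce ({u}ᶜ : Set V))
        ⟨x, by simpa using hx⟩ ⟨y, by simpa using hy⟩ ↔
      IsExposedEdge G x y :=
  SimpleGraph.isExposedEdge_induce_iff fun _ ht hxt hyt _ hv hvu =>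
    hN ⟨SimpleGraph.subset_insert_neighborSet_of_isClique ht (hvu ▸ hv) hxt,
      SimpleGraph.subset_insert_neighborSet_of_isClique ht (hvu ▸ hv) hyt⟩
end

section
/- Let (X,d) be a finite metric space. Any maximal sequence of d-erasures starting from the complete graph on X (i.e., a sequence G_0, ..., G_m with G_0 complete, each G_{i+1} obtained from G_i by a d-erasure, and G_m having no exposed edge) terminates in a minimum spanning tree of (X,d). -/
/-!
Throughout the erasure process the graph stays hereditarily simplicial (chordal). An exposed edge
`xy` lies in a unique maximal clique, so the common neighbours of `x` and `y` are pairwise adjacent;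
since by Dirac's lemma every non-complete induced subgraph has two nonadjacent simplicial vertices,
one of them is not such a common neighbour and stays simplicial after `xy` is deleted.

In a chordal graph every edge lying in a triangle is bypassed by a path of exposed edges. As a
`d`-erasure deletes a longest exposed edge `xy`, its endpoints stay joined by a path of edges no
longer than `d(x, y)`. Hence the path optimality condition of minimum spanning trees (every non-edge
`uv` is bridged by a path of edges no longer than `d(u, v)`), which holds trivially for the complete
graph, is preserved; it also implies connectedness.

When no edge is exposed, the bypass property rules out triangles, and a triangle-free chordal graph
is a forest. A spanning tree satisfying the path optimality condition is minimum by the usual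
exchange argument.
-/

variable {V : Type*}

variable {X : Type*} [MetricSpace X] [Fintype X]

/-- The total `d`-weight of a graph on the metric space `X`: the sum of the distances
between the endpoints of its edges. -/
noncomputable def totalWeight (G : SimpleGraph X) : ℝ :=
  ∑ e ∈ G.edgeSet.toFinite.toFinset, Sym2.lift ⟨fun a b => dist a b, fun a b => dist_comm a b⟩ e

/-- `H` is obtained from `G` through a `d`-erasure: deletion of an exposed edge of
maximal weight among the exposed edges of `G`. -/
def DErasure (G H : SimpleGraph X) : Prop :=
  ∃ x y : X, IsExposedEdge G x y ∧ (∀ a b : X, IsExposedEdge G a b → dist a b ≤ dist x y) ∧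
    H = G.deleteEdges {s(x, y)}

namespace SimpleGraph

section Reachability

variable {W : Type*} {G H : SimpleGraph W} {u v w : W}

lemma Reachable.of_forall_adj_s14 (h : ∀ ⦃a b⦄, G.Adj a b → H.Reachable a b)
    (huv : G.Reachable u v) : H.Reachable u v := by
  rw [reachable_iff_reflTransGen] at huv ⊢
  exact huv.lift' id fun a b hab => (reachable_iff_reflTransGen a b).1 (h hab)

lemma Reachable.of_sym2_eq {a b : W} (h : G.Reachable u v) (he : s(a, b) = s(u, v)) :
    G.Reachable a b := by
  rcases Sym2.eq_iff.1 he with ⟨rfl, rfl⟩ | ⟨rfl, rfl⟩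
  exacts [h, h.symm]

lemma Reachable.deleteEdges_or (h : G.Reachable w u) :
    (G.deleteEdges {s(u, v)}).Reachable w u ∨ (G.deleteEdges {s(u, v)}).Reachable w v := by
  rw [reachable_iff_reflTransGen] at h
  induction h using Relation.ReflTransGen.head_induction_on with
  | refl => exact Or.inl .rfl
  | @head w w' hadj _ ih =>
    by_cases he : s(w, w') = s(u, v)
    · rcases Sym2.eq_iff.1 he with ⟨rfl, -⟩ | ⟨rfl, -⟩
      exacts [Or.inl .rfl, Or.inr .rfl]
    · have hadj' : (G.deleteEdges {s(u, v)}).Adj w w' := deleteEdges_adj.2 ⟨hadj, he⟩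
      exact ih.imp hadj'.reachable.trans hadj'.reachable.trans

lemma Connected.of_deleteEdges_le (hG : G.Connected) (hle : G.deleteEdges {s(u, v)} ≤ H)
    (huv : H.Reachable u v) : H.Connected :=
  (connected_iff H).2 ⟨fun a b => (hG.preconnected a b).of_forall_adj_s14 fun a b hab => by
    by_cases he : s(a, b) = s(u, v)
    · exact huv.of_sym2_eq he
    · exact (hle (deleteEdges_adj.2 ⟨hab, he⟩)).reachable, hG.nonempty⟩

end Reachability

section Simplicial

variable {W : Type*} {G : SimpleGraph W} {A : Finset W} {s t a b c d x y z : W}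

def IsSimplicialIn (G : SimpleGraph W) (A : Finset W) (s : W) : Prop :=
  s ∈ A ∧ G.IsClique (↑A ∩ G.neighborSet s)

/-- By Dirac's theorem these are exactly the chordal graphs. -/
def IsHereditarilySimplicial (G : SimpleGraph W) : Prop :=
  ∀ A : Finset W, A.Nonempty → ∃ s, G.IsSimplicialIn A s

/-- The exposed edges of `G[A]`: the common neighbour `z` says that `xy` is not a facet edge, and
`K` is then the unique maximal clique of `G[A]` containing `xy`. -/
def exposedIn (G : SimpleGraph W) (A : Finset W) : SimpleGraph W where
  Adj x y := G.Adj x y ∧ x ∈ A ∧ y ∈ A ∧ (∃ z ∈ A, G.Adj x z ∧ G.Adj y z) ∧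
    ∃ K ⊆ (A : Set W), G.IsClique K ∧
      ∀ t ⊆ (A : Set W), G.IsClique t → x ∈ t → y ∈ t → t ⊆ K
  symm := ⟨fun _ _ ⟨hxy, hx, hy, ⟨z, hz, hxz, hyz⟩, K, hKA, hK, hmax⟩ =>
    ⟨hxy.symm, hy, hx, ⟨z, hz, hyz, hxz⟩, K, hKA, hK,
      fun t htA ht hyt hxt => hmax t htA ht hxt hyt⟩⟩
  loopless := ⟨fun x h => G.loopless.irrefl x h.1⟩

lemma IsClique.isSimplicialIn (hA : G.IsClique (A : Set W)) (hs : s ∈ A) :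
    G.IsSimplicialIn A s :=
  ⟨hs, hA.subset Set.inter_subset_left⟩

lemma IsSimplicialIn.of_erase [DecidableEq W] (ht : G.IsSimplicialIn (A.erase s) t)
    (hts : ¬ G.Adj t s) : G.IsSimplicialIn A t :=
  ⟨Finset.mem_of_mem_erase ht.1, ht.2.subset fun _ hu =>
    Set.mem_inter (Finset.mem_erase.2 ⟨fun h => hts (h ▸ hu.2 :), hu.1⟩) hu.2⟩

/-- Dirac's lemma. -/
theorem IsHereditarilySimplicial.exists_isSimplicialIn_not_adj
    (hG : G.IsHereditarilySimplicial) (hA : ¬ G.IsClique (A : Set W)) :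
    ∃ s t, G.IsSimplicialIn A s ∧ G.IsSimplicialIn A t ∧ s ≠ t ∧ ¬ G.Adj s t := by
  classical
  induction A using Finset.strongInduction with
  | H A ih =>
  obtain ⟨s, hs⟩ := hG A (Finset.nonempty_iff_ne_empty.2 (by rintro rfl; simp at hA))
  obtain ⟨t, ht, hst⟩ : ∃ t, G.IsSimplicialIn (A.erase s) t ∧ ¬ G.Adj s t := by
    by_cases hA' : G.IsClique (A.erase s : Set W)
    · obtain ⟨t, ht, hst⟩ : ∃ t ∈ A.erase s, ¬ G.Adj s t := by
        by_contra! h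
        refine hA ?_
        rw [← Finset.insert_erase hs.1, Finset.coe_insert, isClique_insert]
        exact ⟨hA', fun t ht _ => h t ht⟩
      exact ⟨t, hA'.isSimplicialIn ht, hst⟩
    · obtain ⟨t₁, t₂, ht₁, ht₂, hne, hnadj⟩ := ih _ (Finset.erase_ssubset hs.1) hA'
      by_contra! h
      exact hnadj (hs.2 ⟨Finset.mem_of_mem_erase ht₁.1, h t₁ ht₁⟩
        ⟨Finset.mem_of_mem_erase ht₂.1, h t₂ ht₂⟩ hne)
  exact ⟨s, t, hs, ht.of_erase (fun h => hst h.symm), (Finset.ne_of_mem_erase ht.1).symm, hst⟩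

lemma IsSimplicialIn.exposedIn_adj (hs : G.IsSimplicialIn A s) (hc : c ∈ A) (hd : d ∈ A)
    (hsc : G.Adj s c) (hsd : G.Adj s d) (hcd : c ≠ d) : (G.exposedIn A).Adj s c := by
  refine ⟨hsc, hs.1, hc, ⟨d, hd, hsd, hs.2 ⟨hc, hsc⟩ ⟨hd, hsd⟩ hcd⟩,
    insert s (↑A ∩ G.neighborSet s), Set.insert_subset hs.1 Set.inter_subset_left,
    isClique_insert.2 ⟨hs.2, fun u hu _ => hu.2⟩, fun t htA ht hst _ u hu => ?_⟩
  by_cases hus : u = s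
  · exact Or.inl hus
  · exact Or.inr ⟨htA hu, ht hst hu (Ne.symm hus)⟩

lemma exposedIn_adj_of_erase [DecidableEq W] (h : (G.exposedIn (A.erase s)).Adj c d)
    (hscd : ¬ (G.Adj s c ∧ G.Adj s d)) : (G.exposedIn A).Adj c d := by
  obtain ⟨hcd, hc, hd, ⟨z, hz, hcz, hdz⟩, K, hKA, hK, hmax⟩ := h
  have hsc : s ≠ c := (Finset.ne_of_mem_erase hc).symm
  have hsd : s ≠ d := (Finset.ne_of_mem_erase hd).symm
  refine ⟨hcd, Finset.mem_of_mem_erase hc, Finset.mem_of_mem_erase hd,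
    ⟨z, Finset.mem_of_mem_erase hz, hcz, hdz⟩, K,
    hKA.trans (Finset.coe_subset.2 (Finset.erase_subset s A)), hK,
    fun t htA ht hct hdt => hmax t (fun u hu => ?_) ht hct hdt⟩
  refine Finset.mem_erase.2 ⟨?_, htA hu⟩
  rintro rfl
  exact hscd ⟨ht hu hct hsc, ht hu hdt hsd⟩

lemma IsSimplicialIn.reachable_deleteEdges_exposedIn (hs : G.IsSimplicialIn A s) (hc : c ∈ A)
    (hd : d ∈ A) (hsc : G.Adj s c) (hsd : G.Adj s d) (hcd : c ≠ d) (hsa : s ≠ a) (hsb : s ≠ b) :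
    ((G.exposedIn A).deleteEdges {s(a, b)}).Reachable c d := by
  have hdel : ∀ v, (G.exposedIn A).Adj s v → ((G.exposedIn A).deleteEdges {s(a, b)}).Adj s v :=
    fun v h => deleteEdges_adj.2 ⟨h, by simp [hsa, hsb]⟩
  exact (hdel c (hs.exposedIn_adj hc hd hsc hsd hcd)).symm.reachable.trans
    (hdel d (hs.exposedIn_adj hd hc hsd hsc hcd.symm)).reachable

/-- Induction on `A`, removing a simplicial vertex `s ∉ {a, b}`: an edge `cd` exposed in
`G[A \ {s}]` stays exposed in `G[A]` unless `s` is adjacent to both ends, and then `c s d` is a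
path of exposed edges. -/
theorem IsHereditarilySimplicial.reachable_deleteEdges_exposedIn
    (hG : G.IsHereditarilySimplicial) (ha : a ∈ A) (hb : b ∈ A) (hz : z ∈ A) (hab : G.Adj a b)
    (haz : G.Adj a z) (hbz : G.Adj b z) :
    ((G.exposedIn A).deleteEdges {s(a, b)}).Reachable a b := by
  classical
  induction A using Finset.strongInduction generalizing z with
  | H A ih =>
  by_cases hA : G.IsClique (A : Set W)
  · exact (hA.isSimplicialIn hz).reachable_deleteEdges_exposedIn ha hb haz.symm hbz.symm hab.ne
      haz.ne' hbz.ne'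
  obtain ⟨s, hs, hsa, hsb⟩ : ∃ s, G.IsSimplicialIn A s ∧ s ≠ a ∧ s ≠ b := by
    obtain ⟨s, t, hs, ht, hst, hnadj⟩ := hG.exists_isSimplicialIn_not_adj hA
    by_cases h : s ≠ a ∧ s ≠ b
    · exact ⟨s, hs, h⟩
    · refine ⟨t, ht, ?_, ?_⟩ <;> rintro rfl <;> grind [G.adj_symm]
  by_cases hsab : G.Adj s a ∧ G.Adj s b
  · exact hs.reachable_deleteEdges_exposedIn ha hb hsab.1 hsab.2 hab.ne hsa hsb
  have hzs : z ≠ s := by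
    rintro rfl
    exact hsab ⟨haz.symm, hbz.symm⟩
  refine (ih _ (Finset.erase_ssubset hs.1) (Finset.mem_erase.2 ⟨hsa.symm, ha⟩)
    (Finset.mem_erase.2 ⟨hsb.symm, hb⟩) (Finset.mem_erase.2 ⟨hzs, hz⟩) haz hbz).of_forall_adj_s14 ?_
  intro c d hcd
  obtain ⟨hcd, hne⟩ := deleteEdges_adj.1 hcd
  by_cases hscd : G.Adj s c ∧ G.Adj s d
  · exact hs.reachable_deleteEdges_exposedIn (Finset.mem_of_mem_erase hcd.2.1)
      (Finset.mem_of_mem_erase hcd.2.2.1) hscd.1 hscd.2 hcd.1.ne hsa hsb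
  · exact (deleteEdges_adj.2 ⟨exposedIn_adj_of_erase hcd hscd, hne⟩).reachable

lemma isHereditarilySimplicial_top : (⊤ : SimpleGraph W).IsHereditarilySimplicial :=
  fun _ ⟨_, hs⟩ => ⟨_, IsClique.isSimplicialIn (fun _ _ _ _ h => (top_adj _ _).2 h) hs⟩

lemma IsSimplicialIn.deleteEdges (hs : G.IsSimplicialIn A s)
    (h : ¬ (x ∈ A ∧ y ∈ A ∧ G.Adj s x ∧ G.Adj s y)) :
    (G.deleteEdges {s(x, y)}).IsSimplicialIn A s := by
  refine ⟨hs.1, fun u hu w hw huw => deleteEdges_adj.2 ⟨?_, ?_⟩⟩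
  · exact hs.2 ⟨hu.1, (deleteEdges_adj.1 hu.2).1⟩ ⟨hw.1, (deleteEdges_adj.1 hw.2).1⟩ huw
  · rintro he
    rcases Sym2.eq_iff.1 he with ⟨rfl, rfl⟩ | ⟨rfl, rfl⟩
    · exact h ⟨hu.1, hw.1, (deleteEdges_adj.1 hu.2).1, (deleteEdges_adj.1 hw.2).1⟩
    · exact h ⟨hw.1, hu.1, (deleteEdges_adj.1 hw.2).1, (deleteEdges_adj.1 hu.2).1⟩

/-- Dirac's two nonadjacent simplicial vertices cannot both be common neighbours of `x` and `y`. -/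
theorem IsHereditarilySimplicial.deleteEdges (hG : G.IsHereditarilySimplicial)
    (hxy : G.IsClique (G.commonNeighbors x y)) :
    (G.deleteEdges {s(x, y)}).IsHereditarilySimplicial := by
  intro A hA
  by_cases hAc : G.IsClique (A : Set W)
  · by_cases hx : x ∈ A
    · exact ⟨x, (hAc.isSimplicialIn hx).deleteEdges fun h => G.loopless.irrefl x h.2.2.1⟩
    · obtain ⟨s, hs⟩ := hA
      exact ⟨s, (hAc.isSimplicialIn hs).deleteEdges fun h => hx h.1⟩
  obtain ⟨s, t, hs, ht, hst, hnadj⟩ := hG.exists_isSimplicialIn_not_adj hAc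
  by_cases h : x ∈ A ∧ y ∈ A ∧ G.Adj s x ∧ G.Adj s y
  · refine ⟨t, ht.deleteEdges fun h' => hnadj (hxy ?_ ?_ hst)⟩
    exacts [⟨h.2.2.1.symm, h.2.2.2.symm⟩, ⟨h'.2.2.1.symm, h'.2.2.2.symm⟩]
  · exact ⟨s, hs.deleteEdges h⟩

/-- A simplicial vertex of a cycle spans a triangle with its two neighbours on the cycle. -/
theorem IsHereditarilySimplicial.isAcyclic (hG : G.IsHereditarilySimplicial)
    (h3 : G.CliqueFree 3) : G.IsAcyclic := by
  classical
  intro v p hp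
  obtain ⟨s, hs, hclique⟩ := hG p.support.toFinset ⟨v, by simp⟩
  obtain ⟨u, w, huw, hnbr⟩ :=
    Set.ncard_eq_two.1 (hp.ncard_neighborSet_toSubgraph_eq_two (List.mem_toFinset.1 hs))
  have hu : p.toSubgraph.Adj s u := by rw [← Subgraph.mem_neighborSet, hnbr]; simp
  have hw : p.toSubgraph.Adj s w := by rw [← Subgraph.mem_neighborSet, hnbr]; simp
  have hmem : ∀ {x}, p.toSubgraph.Adj s x → x ∈ ↑p.support.toFinset ∩ G.neighborSet s :=
    fun h => ⟨by simpa using h.snd_mem, h.adj_sub⟩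
  exact h3 {s, u, w}
    (is3Clique_triple_iff.2 ⟨hu.adj_sub, hw.adj_sub, hclique (hmem hu) (hmem hw) huw⟩)

theorem IsHereditarilySimplicial.cliqueFree_three [Fintype W] (hG : G.IsHereditarilySimplicial)
    (h : ∀ x y, ¬ (G.exposedIn Finset.univ).Adj x y) : G.CliqueFree 3 := by
  classical
  intro t ht
  obtain ⟨a, b, c, hab, hac, hbc, rfl⟩ := is3Clique_iff.1 ht
  obtain ⟨p⟩ := hG.reachable_deleteEdges_exposedIn (Finset.mem_univ a) (Finset.mem_univ b)
    (Finset.mem_univ c) hab hac hbc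
  cases p with
  | nil => exact hab.ne rfl
  | cons hadj _ => exact h _ _ (deleteEdges_adj.1 hadj).1

end Simplicial

section Exposed

variable {W : Type*} [Fintype W] {G : SimpleGraph W} {x y : W}

lemma isExposedEdge_iff_exposedIn_univ_adj :
    IsExposedEdge G x y ↔ (G.exposedIn Finset.univ).Adj x y := by
  simp only [exposedIn, Finset.mem_univ, Finset.coe_univ, Set.subset_univ, true_and, true_implies]
  constructor
  · rintro ⟨hxy, ⟨M, ⟨hM, hxM, hyM⟩, huniq⟩, hnf⟩
    refine ⟨hxy, ?_, M, hM.1, fun t ht hxt hyt => ?_⟩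
    · have hnm : ¬ IsMaxClique G {x, y} := fun h => hnf ⟨hxy, h⟩
      simp only [IsMaxClique, isClique_pair, hxy, implies_true, true_and, not_forall] at hnm
      obtain ⟨t, ht, hsub, hne⟩ := hnm
      obtain ⟨z, hzt, hz⟩ := Set.exists_of_ssubset (hsub.ssubset_of_ne (Ne.symm hne))
      simp only [Set.mem_insert_iff, Set.mem_singleton_iff, not_or] at hz
      exact ⟨z, ht (hsub (by simp)) hzt (Ne.symm hz.1), ht (hsub (by simp)) hzt (Ne.symm hz.2)⟩
    · obtain ⟨M', htM', hM'⟩ := Finite.exists_le_maximal (α := Set W) ht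
      have : M' = M := huniq M' ⟨⟨hM'.1, fun s hs hMs => (hM'.2 hs hMs).antisymm hMs⟩,
        htM' hxt, htM' hyt⟩
      exact this ▸ htM'
  · rintro ⟨hxy, ⟨z, hxz, hyz⟩, K, hK, hmax⟩
    have hpair : ({x, y} : Set W) ⊆ K := hmax _ (isClique_pair.2 fun _ => hxy) (by simp) (by simp)
    refine ⟨hxy, ⟨K, ⟨⟨hK, fun t ht hKt => (hmax t ht (hKt (hpair (by simp)))
      (hKt (hpair (by simp)))).antisymm hKt⟩, hpair (by simp), hpair (by simp)⟩, ?_⟩, ?_⟩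
    · rintro M ⟨hM, hxM, hyM⟩
      exact (hM.2 K hK (hmax M hM.1 hxM hyM)).symm
    · rintro ⟨-, -, hmax₂⟩
      have htri : G.IsClique ({x, y, z} : Set W) := by
        simp only [isClique_insert, isClique_singleton, Set.mem_insert_iff, Set.mem_singleton_iff]
        grind [G.adj_symm]
      have hz : z ∈ ({x, y} : Set W) := hmax₂ _ htri (by grind) ▸ (by simp)
      rcases hz with rfl | rfl
      exacts [G.loopless.irrefl _ hxz, G.loopless.irrefl _ hyz]

lemma isClique_commonNeighbors_of_exposedIn_univ_adj (h : (G.exposedIn Finset.univ).Adj x y) :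
    G.IsClique (G.commonNeighbors x y) := by
  obtain ⟨hxy, -, -, -, K, -, hK, hmax⟩ := h
  refine hK.subset fun z hz => ?_
  rw [mem_commonNeighbors] at hz
  have htri : G.IsClique ({z, x, y} : Set W) := by
    simp only [isClique_insert, isClique_singleton, Set.mem_insert_iff, Set.mem_singleton_iff]
    grind [G.adj_symm]
  exact hmax _ (by simp) htri (by simp) (by simp) (by simp)

end Exposed

end SimpleGraph

open SimpleGraph

section PathOptimal

variable {Y : Type*} [PseudoMetricSpace Y] {G : SimpleGraph Y} {r r' : ℝ} {x y : Y}

def shortEdges (G : SimpleGraph Y) (r : ℝ) : SimpleGraph Y where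
  Adj a b := G.Adj a b ∧ dist a b ≤ r
  symm := ⟨fun a b h => ⟨h.1.symm, dist_comm b a ▸ h.2⟩⟩
  loopless := ⟨fun a h => G.loopless.irrefl a h.1⟩

lemma shortEdges_le : shortEdges G r ≤ G := fun _ _ h => h.1

lemma shortEdges_mono (h : r ≤ r') : shortEdges G r ≤ shortEdges G r' :=
  fun _ _ hab => ⟨hab.1, hab.2.trans h⟩

/-- The path optimality condition of minimum spanning trees. -/
def IsPathOptimal (G : SimpleGraph Y) : Prop :=
  ∀ u v, ¬ G.Adj u v → (shortEdges G (dist u v)).Reachable u v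

lemma isPathOptimal_top : IsPathOptimal (⊤ : SimpleGraph Y) := by
  intro u v h
  rw [top_adj, not_ne_iff] at h
  exact h ▸ .rfl

lemma IsPathOptimal.connected [Nonempty Y] (hG : IsPathOptimal G) : G.Connected := by
  refine (connected_iff G).2 ⟨fun u v => ?_, inferInstance⟩
  by_cases h : G.Adj u v
  exacts [h.reachable, (hG u v h).mono shortEdges_le]

theorem IsPathOptimal.deleteEdges (hG : IsPathOptimal G)
    (hxy : (shortEdges (G.deleteEdges {s(x, y)}) (dist x y)).Reachable x y) :
    IsPathOptimal (G.deleteEdges {s(x, y)}) := by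
  intro u v huv
  by_cases hGuv : G.Adj u v
  · have he : s(u, v) = s(x, y) := by
      by_contra hne
      exact huv (deleteEdges_adj.2 ⟨hGuv, hne⟩)
    rcases Sym2.eq_iff.1 he with ⟨rfl, rfl⟩ | ⟨rfl, rfl⟩
    · exact hxy
    · exact dist_comm u v ▸ hxy.symm
  refine (hG u v hGuv).of_forall_adj_s14 fun a b hab => ?_
  by_cases he : s(a, b) = s(x, y)
  · have hle : dist x y ≤ dist u v := by
      rcases Sym2.eq_iff.1 he with ⟨rfl, rfl⟩ | ⟨rfl, rfl⟩
      exacts [hab.2, dist_comm a b ▸ hab.2]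
    exact (hxy.mono (shortEdges_mono hle)).of_sym2_eq he
  · exact Adj.reachable ⟨deleteEdges_adj.2 ⟨hab.1, he⟩, hab.2⟩

theorem reachable_shortEdges_deleteEdges_of_isExposedEdge [Fintype Y]
    (hG : G.IsHereditarilySimplicial) (hxy : IsExposedEdge G x y)
    (hmax : ∀ a b, IsExposedEdge G a b → dist a b ≤ dist x y) :
    (shortEdges (G.deleteEdges {s(x, y)}) (dist x y)).Reachable x y := by
  obtain ⟨hxy, -, -, ⟨z, -, hxz, hyz⟩, -⟩ := isExposedEdge_iff_exposedIn_univ_adj.1 hxy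
  refine (hG.reachable_deleteEdges_exposedIn (Finset.mem_univ x) (Finset.mem_univ y)
    (Finset.mem_univ z) hxy hxz hyz).mono fun a b hab => ?_
  obtain ⟨hab, hne⟩ := deleteEdges_adj.1 hab
  exact ⟨deleteEdges_adj.2 ⟨hab.1, hne⟩, hmax a b (isExposedEdge_iff_exposedIn_univ_adj.2 hab)⟩

end PathOptimal

section Weight

variable {G H : SimpleGraph X} {u v c d : X}

lemma DErasure.isHereditarilySimplicial (h : DErasure G H) (hG : G.IsHereditarilySimplicial) :
    H.IsHereditarilySimplicial := by
  obtain ⟨x, y, hxy, -, rfl⟩ := h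
  exact hG.deleteEdges
    (isClique_commonNeighbors_of_exposedIn_univ_adj (isExposedEdge_iff_exposedIn_univ_adj.1 hxy))

lemma DErasure.isPathOptimal (h : DErasure G H) (hG : G.IsHereditarilySimplicial)
    (hopt : IsPathOptimal G) : IsPathOptimal H := by
  obtain ⟨x, y, hxy, hmax, rfl⟩ := h
  exact hopt.deleteEdges (reachable_shortEdges_deleteEdges_of_isExposedEdge hG hxy hmax)

lemma totalWeight_eq_add_of_edgeSet_eq_insert (h : G.edgeSet = insert s(c, d) H.edgeSet)
    (hcd : ¬ H.Adj c d) : totalWeight G = totalWeight H + dist c d := by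
  classical
  have hfin : G.edgeSet.toFinite.toFinset = insert s(c, d) H.edgeSet.toFinite.toFinset := by
    ext e
    simp [h]
  rw [totalWeight, hfin, Finset.sum_insert (by simpa using hcd), add_comm]
  rfl

lemma totalWeight_deleteEdges_add (h : G.Adj u v) :
    totalWeight (G.deleteEdges {s(u, v)}) + dist u v = totalWeight G :=
  (totalWeight_eq_add_of_edgeSet_eq_insert (by
    rw [edgeSet_deleteEdges, Set.insert_sdiff_singleton, Set.insert_eq_of_mem (G.mem_edgeSet.2 h)])
    (by simp)).symm

lemma totalWeight_sup_edge (hcd : c ≠ d) (h : ¬ G.Adj c d) :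
    totalWeight (G ⊔ edge c d) = totalWeight G + dist c d :=
  totalWeight_eq_add_of_edgeSet_eq_insert
    (by rw [edgeSet_sup, edgeSet_edge_of_ne hcd, Set.union_singleton]) h

end Weight

/-- Either `uv` is redundant in `H`, or it is replaced by the edge of the short `T`-path from `u`
to `v` that leaves the component of `u` in `H - uv`. -/
theorem IsPathOptimal.exists_exchange {T H : SimpleGraph X} {u v : X} (hT : IsPathOptimal T)
    (hH : H.Connected) (huv : H.Adj u v) (hTuv : ¬ T.Adj u v) :
    ∃ H' : SimpleGraph X, H'.Connected ∧ totalWeight H' ≤ totalWeight H ∧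
      H'.edgeSet \ T.edgeSet ⊆ (H.edgeSet \ T.edgeSet) \ {s(u, v)} := by
  set H₀ : SimpleGraph X := H.deleteEdges {s(u, v)}
  have hw := totalWeight_deleteEdges_add huv
  by_cases hr : H₀.Reachable u v
  · refine ⟨H₀, hH.of_deleteEdges_le le_rfl hr, by linarith [dist_nonneg (x := u) (y := v)], ?_⟩
    rw [edgeSet_deleteEdges, Set.sdiff_sdiff_comm]
  obtain ⟨⟨⟨c, d⟩, hcd⟩, -, hc, hd⟩ := (hT u v hTuv).some.exists_boundary_dart
    {w | H₀.Reachable u w} .rfl hr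
  dsimp only at hcd
  simp only [Set.mem_ofPred_eq] at hc hd
  have hdv : H₀.Reachable d v :=
    (hH.preconnected d u).deleteEdges_or.resolve_left fun h => hd h.symm
  have hH₀cd : ¬ H₀.Adj c d := fun h => hd (hc.trans h.reachable)
  have hcd' : (H₀ ⊔ edge c d).Adj c d :=
    Or.inr ((edge_adj _ _ _ _).2 ⟨Or.inl ⟨rfl, rfl⟩, hcd.1.ne⟩)
  refine ⟨H₀ ⊔ edge c d, hH.of_deleteEdges_le le_sup_left ?_, ?_, ?_⟩
  · exact (hc.mono le_sup_left).trans (hcd'.reachable.trans (hdv.mono le_sup_left))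
  · rw [totalWeight_sup_edge hcd.1.ne hH₀cd]
    linarith [hcd.2]
  · have hcdT : {s(c, d)} ⊆ T.edgeSet := Set.singleton_subset_iff.2 hcd.1
    rw [edgeSet_sup, edgeSet_edge_of_ne hcd.1.ne, Set.union_sdiff_distrib, edgeSet_deleteEdges,
      Set.sdiff_sdiff_comm, Set.sdiff_eq_empty.2 hcdT, Set.union_empty]

theorem IsPathOptimal.totalWeight_le {T H : SimpleGraph X} (hT : T.IsTree) (hopt : IsPathOptimal T)
    (hH : H.Connected) : totalWeight T ≤ totalWeight H := by
  by_cases hle : H ≤ T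
  · rw [(isTree_iff_minimal_connected.1 hT).eq_of_le hH hle]
  obtain ⟨u, v, huv, hTuv⟩ : ∃ u v, H.Adj u v ∧ ¬ T.Adj u v := by
    simpa [le_iff_adj] using hle
  obtain ⟨H', hH', hw, hsub⟩ := hopt.exists_exchange hH huv hTuv
  have : (H'.edgeSet \ T.edgeSet).ncard < (H.edgeSet \ T.edgeSet).ncard :=
    Set.ncard_lt_ncard (hsub.trans_ssubset (Set.sdiff_singleton_ssubset.2 ⟨huv, hTuv⟩))
  exact (hopt.totalWeight_le hT hH').trans hw
termination_by (H.edgeSet \ T.edgeSet).ncard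

/-- A maximal sequence of `d`-erasures starting from the complete graph on a finite
metric space terminates in a minimum spanning tree. -/
theorem maximal_dErasure_sequence_is_mst [Nonempty X] (m : ℕ)
    (Gs : ℕ → SimpleGraph X) (h0 : Gs 0 = ⊤)
    (hstep : ∀ i < m, DErasure (Gs i) (Gs (i + 1)))
    (hmax : ∀ x y : X, ¬ IsExposedEdge (Gs m) x y) :
    (Gs m).IsTree ∧
      ∀ T' : SimpleGraph X, T'.IsTree → totalWeight (Gs m) ≤ totalWeight T' := by
  have hinv : ∀ i ≤ m, (Gs i).IsHereditarilySimplicial ∧ IsPathOptimal (Gs i) := by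
    intro i hi
    induction i with
    | zero => exact h0 ▸ ⟨isHereditarilySimplicial_top, isPathOptimal_top⟩
    | succ i ih =>
      obtain ⟨hHS, hopt⟩ := ih (by omega)
      have hi' := hstep i (by omega)
      exact ⟨hi'.isHereditarilySimplicial hHS, hi'.isPathOptimal hHS hopt⟩
  obtain ⟨hHS, hopt⟩ := hinv m le_rfl
  have hacyc : (Gs m).IsAcyclic := hHS.isAcyclic
    (hHS.cliqueFree_three fun x y h => hmax x y (isExposedEdge_iff_exposedIn_univ_adj.2 h))
  have htree : (Gs m).IsTree := ⟨hopt.connected, hacyc⟩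
  exact ⟨htree, fun T' hT' => hopt.totalWeight_le htree hT'.1⟩
end

section
/- Let G_0, G_1, ..., G_m be any sequence of graphs on a finite vertex set V with G_0 the complete graph and each G_{i+1} obtained from G_i by deleting a single exposed edge e_i of G_i. Then there exists a metric d on V such that the same sequence G_0, G_1, ..., G_m is a sequence of d-erasures; for instance, for any ε with 0 < ε < 1/(m−1) (when m ≥ 2), the function d given by d(x,y) = 1 for edges xy of G_m and d(x,y) = 2 − jε when xy = e_j is such a metric. -/
theorem triangle_of_forall_ne_mem_Icc {α : Type*} (d : α → α → ℝ) (r : ℝ)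
    (hdiag : ∀ a, d a a = 0) (hoff : ∀ a b, a ≠ b → d a b ∈ Set.Icc r (2 * r)) :
    ∀ a b c, d a c ≤ d a b + d b c := by
  intro a b c
  rcases eq_or_ne a b with rfl | hab
  · simp [hdiag]
  rcases eq_or_ne b c with rfl | hbc
  · simp [hdiag]
  have hab' := hoff a b hab
  have hbc' := hoff b c hbc
  rcases eq_or_ne a c with rfl | hac
  · rw [hdiag]
    linarith [hab'.1, hab'.2, hbc'.1]
  · linarith [(hoff a c hac).2, hab'.1, hbc'.1]

theorem nat_mul_lt_one_of_lt {m : ℕ} {ε : ℝ} (hε : 0 < ε) (hεm : 2 ≤ m → ε < 1 / ((m : ℝ) - 1))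
    {j : ℕ} (hj : j < m) : (j : ℝ) * ε < 1 := by
  rcases Nat.lt_or_ge m 2 with hm | hm
  · obtain rfl : j = 0 := by omega
    simp
  · have hm1 : (0 : ℝ) < (m : ℝ) - 1 := by
      have : (2 : ℝ) ≤ m := by exact_mod_cast hm
      linarith
    have hjm : (j : ℝ) ≤ (m : ℝ) - 1 := by
      have : (j : ℝ) + 1 ≤ m := by exact_mod_cast hj
      linarith
    calc (j : ℝ) * ε ≤ ((m : ℝ) - 1) * ε := by gcongr
      _ < ((m : ℝ) - 1) * (1 / ((m : ℝ) - 1)) := mul_lt_mul_of_pos_left (hεm hm) hm1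
      _ = 1 := by field_simp

section DeletionSequence

variable {m : ℕ} {Gs : ℕ → SimpleGraph V} {x y : ℕ → V}

theorem deletionSeq_antitone (hdel : ∀ i < m, Gs (i + 1) = (Gs i).deleteEdges {s(x i, y i)})
    {i k : ℕ} (hik : i ≤ k) (hkm : k ≤ m) : Gs k ≤ Gs i := by
  induction k, hik using Nat.le_induction with
  | base => exact le_rfl
  | succ k _ ih =>
    rw [hdel k (by omega)]
    exact (SimpleGraph.deleteEdges_le _).trans (ih (by omega))

theorem deletionSeq_le_of_adj (hdel : ∀ i < m, Gs (i + 1) = (Gs i).deleteEdges {s(x i, y i)})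
    {i j : ℕ} (him : i ≤ m) (hj : j < m) {a b : V} (hab : (Gs i).Adj a b)
    (he : s(x j, y j) = s(a, b)) : i ≤ j := by
  by_contra! hji
  have hadj := deletionSeq_antitone hdel hji him hab
  rw [hdel j hj, SimpleGraph.deleteEdges_adj] at hadj
  exact hadj.2 he.symm

theorem deletionSeq_injective (hdel : ∀ i < m, Gs (i + 1) = (Gs i).deleteEdges {s(x i, y i)})
    (hadj : ∀ i < m, (Gs i).Adj (x i) (y i)) {j k : ℕ} (hj : j < m) (hk : k < m)
    (he : s(x j, y j) = s(x k, y k)) : j = k :=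
  le_antisymm (deletionSeq_le_of_adj hdel hj.le hk (hadj j hj) he.symm)
    (deletionSeq_le_of_adj hdel hk.le hj (hadj k hk) he)

theorem deletionSeq_adj_of_forall_ne (h0 : Gs 0 = ⊤)
    (hdel : ∀ i < m, Gs (i + 1) = (Gs i).deleteEdges {s(x i, y i)}) {a b : V} (hab : a ≠ b)
    {k : ℕ} (hkm : k ≤ m) (hne : ∀ j < k, s(x j, y j) ≠ s(a, b)) : (Gs k).Adj a b := by
  induction k with
  | zero => simpa [h0] using hab
  | succ k ih =>
    rw [hdel k (by omega), SimpleGraph.deleteEdges_adj, Set.mem_singleton_iff]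
    exact ⟨ih (by omega) fun j hj => hne j (by omega), (hne k (by omega)).symm⟩

theorem deletionSeq_exists_of_not_adj (h0 : Gs 0 = ⊤)
    (hdel : ∀ i < m, Gs (i + 1) = (Gs i).deleteEdges {s(x i, y i)}) {a b : V} (hab : a ≠ b)
    (hna : ¬ (Gs m).Adj a b) : ∃ j < m, s(x j, y j) = s(a, b) := by
  by_contra! hne
  exact hna (deletionSeq_adj_of_forall_ne h0 hdel hab le_rfl hne)

open Classical in
noncomputable def erasureWeight (Gs : ℕ → SimpleGraph V) (m : ℕ) (x y : ℕ → V) (ε : ℝ)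
    (a b : V) : ℝ :=
  if a = b then 0
  else if (Gs m).Adj a b then 1
  else 2 - (sInf {j | j < m ∧ s(x j, y j) = s(a, b)} : ℕ) * ε

variable {ε : ℝ}

theorem erasureWeight_self (a : V) : erasureWeight Gs m x y ε a a = 0 := by
  simp [erasureWeight]

theorem erasureWeight_comm (a b : V) :
    erasureWeight Gs m x y ε a b = erasureWeight Gs m x y ε b a := by
  rcases eq_or_ne a b with rfl | hab
  · rfl
  · simp only [erasureWeight, hab, hab.symm, if_false]
    rw [SimpleGraph.adj_comm, Sym2.eq_swap (a := a)]

theorem erasureWeight_of_adj {a b : V} (hab : (Gs m).Adj a b) :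
    erasureWeight Gs m x y ε a b = 1 := by
  simp [erasureWeight, hab.ne, hab]

theorem erasureWeight_of_sym2_eq (hdel : ∀ i < m, Gs (i + 1) = (Gs i).deleteEdges {s(x i, y i)})
    (hadj : ∀ i < m, (Gs i).Adj (x i) (y i)) {j : ℕ} (hj : j < m) {a b : V}
    (he : s(x j, y j) = s(a, b)) : erasureWeight Gs m x y ε a b = 2 - j * ε := by
  have hab : (Gs j).Adj a b := by
    rw [← SimpleGraph.mem_edgeSet, ← he]
    exact hadj j hj
  have hna : ¬ (Gs m).Adj a b := fun h =>
    (deletionSeq_le_of_adj hdel le_rfl hj h he).not_gt hj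
  have hset : {k | k < m ∧ s(x k, y k) = s(a, b)} = {j} := by
    ext k
    simp only [Set.mem_ofPred_eq, Set.mem_singleton_iff]
    refine ⟨fun ⟨hk, hke⟩ => deletionSeq_injective hdel hadj hk hj (hke.trans he.symm), ?_⟩
    rintro rfl
    exact ⟨hj, he⟩
  simp only [erasureWeight, hab.ne, hna, hset, if_false, csInf_singleton]

variable (hdel : ∀ i < m, Gs (i + 1) = (Gs i).deleteEdges {s(x i, y i)})
  (hadj : ∀ i < m, (Gs i).Adj (x i) (y i)) (h0 : Gs 0 = ⊤) (hε0 : 0 ≤ ε)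
  (hε : ∀ j < m, (j : ℝ) * ε < 1)
include hdel hadj h0 hε0 hε

theorem erasureWeight_mem_Icc {a b : V} (hab : a ≠ b) :
    erasureWeight Gs m x y ε a b ∈ Set.Icc 1 2 := by
  by_cases hm : (Gs m).Adj a b
  · rw [erasureWeight_of_adj hm]
    norm_num
  · obtain ⟨j, hj, he⟩ := deletionSeq_exists_of_not_adj h0 hdel hab hm
    rw [erasureWeight_of_sym2_eq hdel hadj hj he]
    have := hε j hj
    constructor <;> nlinarith

theorem erasureWeight_eq_zero_iff {a b : V} :
    erasureWeight Gs m x y ε a b = 0 ↔ a = b := by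
  refine ⟨fun hab => ?_, fun hab => hab ▸ erasureWeight_self a⟩
  by_contra hne
  linarith [(erasureWeight_mem_Icc hdel hadj h0 hε0 hε hne).1]

theorem erasureWeight_le_of_adj {i : ℕ} (hi : i < m) {a b : V} (hab : (Gs i).Adj a b) :
    erasureWeight Gs m x y ε a b ≤ erasureWeight Gs m x y ε (x i) (y i) := by
  rw [erasureWeight_of_sym2_eq hdel hadj hi rfl]
  by_cases hm : (Gs m).Adj a b
  · rw [erasureWeight_of_adj hm]
    linarith [hε i hi]
  · obtain ⟨j, hj, he⟩ := deletionSeq_exists_of_not_adj h0 hdel hab.ne hm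
    rw [erasureWeight_of_sym2_eq hdel hadj hj he]
    have hij : (i : ℝ) ≤ j := by exact_mod_cast deletionSeq_le_of_adj hdel hi.le hj hab he
    nlinarith

end DeletionSequence

theorem erasure_sequence_is_dErasure_sequence_general (m : ℕ)
    (Gs : ℕ → SimpleGraph V) (x y : ℕ → V) (h0 : Gs 0 = ⊤)
    (hexp : ∀ i < m, IsExposedEdge (Gs i) (x i) (y i))
    (hdel : ∀ i < m, Gs (i + 1) = (Gs i).deleteEdges {s(x i, y i)}) :
    (∃ d : V → V → ℝ,
      (∀ a b, d a b = 0 ↔ a = b) ∧ (∀ a b, d a b = d b a) ∧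
      (∀ a b c, d a c ≤ d a b + d b c) ∧
      (∀ i < m, ∀ a b, IsExposedEdge (Gs i) a b → d a b ≤ d (x i) (y i))) ∧
    (∀ ε : ℝ, 0 < ε → (2 ≤ m → ε < 1 / ((m : ℝ) - 1)) →
      ∃ d : V → V → ℝ,
        (∀ a b, d a b = 0 ↔ a = b) ∧ (∀ a b, d a b = d b a) ∧
        (∀ a b c, d a c ≤ d a b + d b c) ∧
        (∀ a b, (Gs m).Adj a b → d a b = 1) ∧
        (∀ j < m, d (x j) (y j) = 2 - (j : ℝ) * ε) ∧
        (∀ i < m, ∀ a b, IsExposedEdge (Gs i) a b → d a b ≤ d (x i) (y i))) := by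
  have hadj : ∀ i < m, (Gs i).Adj (x i) (y i) := fun i hi => (hexp i hi).1
  have hweight : ∀ ε : ℝ, 0 ≤ ε → (∀ j < m, (j : ℝ) * ε < 1) →
      ∃ d : V → V → ℝ,
        (∀ a b, d a b = 0 ↔ a = b) ∧ (∀ a b, d a b = d b a) ∧
        (∀ a b c, d a c ≤ d a b + d b c) ∧
        (∀ a b, (Gs m).Adj a b → d a b = 1) ∧
        (∀ j < m, d (x j) (y j) = 2 - (j : ℝ) * ε) ∧
        (∀ i < m, ∀ a b, IsExposedEdge (Gs i) a b → d a b ≤ d (x i) (y i)) := by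
    intro ε hε0 hε
    have hIcc : ∀ a b, a ≠ b → erasureWeight Gs m x y ε a b ∈ Set.Icc 1 (2 * 1) :=
      fun a b hab => by simpa using erasureWeight_mem_Icc hdel hadj h0 hε0 hε hab
    exact ⟨erasureWeight Gs m x y ε, fun a b => erasureWeight_eq_zero_iff hdel hadj h0 hε0 hε,
      erasureWeight_comm, triangle_of_forall_ne_mem_Icc _ 1 erasureWeight_self hIcc,
      fun a b => erasureWeight_of_adj, fun j hj => erasureWeight_of_sym2_eq hdel hadj hj rfl,
      fun i hi a b hab => erasureWeight_le_of_adj hdel hadj h0 hε0 hε hi hab.1⟩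
  refine ⟨?_, fun ε hε hεm => hweight ε hε.le fun j hj => nat_mul_lt_one_of_lt hε hεm hj⟩
  obtain ⟨d, hd0, hsymm, htri, -, -, hmax⟩ := hweight 0 le_rfl (by simp)
  exact ⟨d, hd0, hsymm, htri, hmax⟩

/-- For any sequence of erasures `G₀, …, Gₘ` starting from the complete graph, with
`eⱼ = (x j)(y j)` the edge deleted at stage `j`, there is a metric `d` on `V` making
the sequence a sequence of `d`-erasures; moreover, for any `0 < ε < 1/(m−1)`
(the latter condition imposed when `m ≥ 2`), the function assigning weight `1` to the
edges of `Gₘ` and `2 − jε` to `eⱼ` is such a metric. -/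
theorem erasure_sequence_is_dErasure_sequence [Fintype V] (m : ℕ)
    (Gs : ℕ → SimpleGraph V) (x y : ℕ → V) (h0 : Gs 0 = ⊤)
    (hexp : ∀ i < m, IsExposedEdge (Gs i) (x i) (y i))
    (hdel : ∀ i < m, Gs (i + 1) = (Gs i).deleteEdges {s(x i, y i)}) :
    (∃ d : V → V → ℝ,
      (∀ a b, d a b = 0 ↔ a = b) ∧ (∀ a b, d a b = d b a) ∧
      (∀ a b c, d a c ≤ d a b + d b c) ∧
      (∀ i < m, ∀ a b, IsExposedEdge (Gs i) a b → d a b ≤ d (x i) (y i))) ∧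
    (∀ ε : ℝ, 0 < ε → (2 ≤ m → ε < 1 / ((m : ℝ) - 1)) →
      ∃ d : V → V → ℝ,
        (∀ a b, d a b = 0 ↔ a = b) ∧ (∀ a b, d a b = d b a) ∧
        (∀ a b c, d a c ≤ d a b + d b c) ∧
        (∀ a b, (Gs m).Adj a b → d a b = 1) ∧
        (∀ j < m, d (x j) (y j) = 2 - (j : ℝ) * ε) ∧
        (∀ i < m, ∀ a b, IsExposedEdge (Gs i) a b → d a b ≤ d (x i) (y i))) :=
  erasure_sequence_is_dErasure_sequence_general m Gs x y h0 hexp hdel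
end
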